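/- arXiv:1907.08675 — 10 statements merged into one kernel-verified Lean document; each statement's English description precedes it below -/
import Mathlib

section
/- Let K_X be a generalized number lattice on a finite set X, i.e., K_X = L_X + V_X where L_X is a number lattice (the set of integer linear combinations of finitely many rational vectors) and V_X is a rational vector space. Then K_X can be rewritten as K_X = L'_X + V_X where L'_X is a number lattice contained in the orthogonal complement of V_X; moreover in this orthogonal decomposition both L'_X and V_X are uniquely determined by K_X. -/
/-!
Since the dot product on ℚ^X is positive definite, V⊥ is a complement of V. Projecting L onto V⊥
along V does not change L + V, and the image of a lattice under a linear map is a lattice. Uniqueness: if K = L₂ + V₂ with L₂ ⊆ V₂⊥, then V₂ is the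
vector space part of K, since the V₂⊥-component of a vector all of whose rational multiples lie in
K is divisible by every integer inside the finitely generated free ℤ-module L₂, hence zero; and
then L₂ = K ∩ V₂⊥.
-/

open scoped Pointwise

/-- A number lattice: the set of integer linear combinations of finitely many vectors. -/
def IsNumLat {M : Type*} [AddCommGroup M] [Module ℚ M] (L : Set M) : Prop :=
  ∃ (n : ℕ) (b : Fin n → M), L = {x | ∃ l : Fin n → ℤ, x = ∑ i, (l i : ℚ) • b i}

section NumberLattice

variable {M : Type*} [AddCommGroup M] [Module ℚ M]

theorem coe_span_int_range {n : ℕ} (b : Fin n → M) :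
    (Submodule.span ℤ (Set.range b) : Set M) =
      {x | ∃ l : Fin n → ℤ, x = ∑ i, (l i : ℚ) • b i} := by
  ext x
  simp [Submodule.mem_span_range_iff_exists_fun, Int.cast_smul_eq_zsmul, eq_comm]

theorem IsNumLat.exists_fg {L : Set M} (hL : IsNumLat L) :
    ∃ N : Submodule ℤ M, N.FG ∧ (N : Set M) = L := by
  obtain ⟨n, b, rfl⟩ := hL
  exact ⟨_, Submodule.fg_span (Set.finite_range b), coe_span_int_range b⟩

theorem IsNumLat.zero_mem {L : Set M} (hL : IsNumLat L) : (0 : M) ∈ L := by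
  obtain ⟨n, b, rfl⟩ := hL
  exact ⟨0, by simp⟩

theorem IsNumLat.image {M' : Type*} [AddCommGroup M'] [Module ℚ M'] {L : Set M}
    (hL : IsNumLat L) (f : M →ₗ[ℚ] M') : IsNumLat (f '' L) := by
  obtain ⟨n, b, rfl⟩ := hL
  refine ⟨n, f ∘ b, ?_⟩
  ext y
  simp [map_sum, eq_comm]

theorem Submodule.FG.eq_zero_of_forall_rat_smul_mem {N : Submodule ℤ M} (hN : N.FG) {d : M}
    (hd : ∀ α : ℚ, α • d ∈ N) : d = 0 := by
  have : Module.Finite ℤ N := Module.Finite.iff_fg.mpr hN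
  have : Module.IsTorsionFree ℤ M := .trans_faithfulSMul ℤ ℚ M
  let b := Module.Free.chooseBasis ℤ N
  by_contra hd0
  let y : N := ⟨d, by simpa using hd 1⟩
  have hy : y ≠ 0 := fun h => hd0 (congrArg Subtype.val h)
  obtain ⟨i, hi⟩ := Finsupp.ne_iff.1 (b.repr.map_ne_zero_iff.2 hy)
  set z := b.repr y i
  -- `y` is divisible by `2 z` in `N`, so `2 z` divides its coordinate `z`
  let e : N := ⟨((2 * z : ℤ) : ℚ)⁻¹ • d, hd _⟩
  have hez : (2 * z) • e = y := by
    ext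
    have h2z : ((2 * z : ℤ) : ℚ) ≠ 0 := by exact_mod_cast mul_ne_zero two_ne_zero hi
    simp only [e, y, Submodule.coe_smul, ← Int.cast_smul_eq_zsmul ℚ, smul_smul,
      mul_inv_cancel₀ h2z, one_smul]
  have hcoord : 2 * z * b.repr e i = z := by
    simpa [z] using congrArg (fun x => b.repr x i) hez
  have : 2 * b.repr e i = 1 := mul_left_cancel₀ hi (by linear_combination hcoord)
  omega

theorem IsNumLat.eq_zero_of_forall_rat_smul_mem {L : Set M} (hL : IsNumLat L) {d : M}
    (hd : ∀ α : ℚ, α • d ∈ L) : d = 0 := by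
  obtain ⟨N, hN, rfl⟩ := hL.exists_fg
  exact hN.eq_zero_of_forall_rat_smul_mem hd

end NumberLattice

def vectorSpacePart {M : Type*} [AddCommGroup M] [Module ℚ M] (K : Set M) : Set M :=
  {c | ∀ α : ℚ, α • c ∈ K}

section Complement

variable {M : Type*} [AddCommGroup M] [Module ℚ M] {V W : Submodule ℚ M}

theorem add_submodule_eq_image_projection_add (h : IsCompl W V) (S : Set M) :
    S + (V : Set M) = W.projection V h '' S + V := by
  ext x
  constructor
  · rintro ⟨s, hs, v, hv, rfl⟩
    exact ⟨_, ⟨s, hs, rfl⟩, s - W.projection V h s + v,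
      V.add_mem (Submodule.sub_projection_mem h s) hv, by beta_reduce; abel⟩
  · rintro ⟨_, ⟨s, hs, rfl⟩, v, hv, rfl⟩
    exact ⟨s, hs, v - (s - W.projection V h s),
      V.sub_mem hv (Submodule.sub_projection_mem h s), by beta_reduce; abel⟩

theorem add_submodule_inter_eq_of_subset {L : Set M} (hLW : L ⊆ W) (h : Disjoint W V) :
    (L + (V : Set M)) ∩ W = L := by
  ext x
  constructor
  · rintro ⟨⟨l, hl, v, hv, rfl⟩, hx⟩
    have hvW : v ∈ W := by simpa using W.sub_mem hx (hLW hl)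
    simpa [Submodule.disjoint_def.1 h v hvW hv] using hl
  · intro hx
    exact ⟨⟨x, hx, 0, V.zero_mem, add_zero x⟩, hLW hx⟩

theorem vectorSpacePart_add_submodule {L : Set M} (hL : IsNumLat L) (hLW : L ⊆ W)
    (h : IsCompl W V) : vectorSpacePart (L + (V : Set M)) = V := by
  ext d
  constructor
  · intro hd
    -- the `W`-component of `L + V` lies in `L`, so that of `d` is infinitely divisible in `L`
    have hproj : ∀ x ∈ L + (V : Set M), W.projection V h x ∈ L := by
      rintro _ ⟨l, hl, v, hv, rfl⟩
      rwa [map_add, Submodule.projection_apply_of_mem_left h (hLW hl),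
        Submodule.projection_apply_of_mem_right h hv, add_zero]
    have h0 : W.projection V h d = 0 :=
      hL.eq_zero_of_forall_rat_smul_mem fun α => by simpa using hproj _ (hd α)
    exact (Submodule.projection_apply_eq_zero_iff h).1 h0
  · intro hd α
    exact ⟨0, hL.zero_mem, α • d, V.smul_mem α hd, zero_add _⟩

end Complement

section DotProduct

variable {X 𝕜 : Type*} [Fintype X] [Field 𝕜]

theorem mem_orthogonal_dotProductBilin_iff {V : Submodule 𝕜 (X → 𝕜)} {l : X → 𝕜} :
    l ∈ LinearMap.BilinForm.orthogonal (dotProductBilin 𝕜 𝕜) V ↔ ∀ v ∈ V, l ⬝ᵥ v = 0 := by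
  simp [LinearMap.BilinForm.mem_orthogonal_iff, dotProduct_comm]

variable [LinearOrder 𝕜] [IsStrictOrderedRing 𝕜]

theorem isCompl_orthogonal_dotProductBilin (V : Submodule 𝕜 (X → 𝕜)) :
    IsCompl V (LinearMap.BilinForm.orthogonal (dotProductBilin 𝕜 𝕜) V) := by
  refine (LinearMap.BilinForm.isCompl_orthogonal_iff_disjoint
    fun x y h => by simpa [dotProduct_comm] using h).2 ?_
  refine Submodule.disjoint_def.2 fun v hv hv' => ?_
  exact dotProduct_self_eq_zero.1 (mem_orthogonal_dotProductBilin_iff.1 hv' v hv)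

end DotProduct

theorem stmt0 {X : Type*} [Fintype X] (K L : Set (X → ℚ)) (V : Submodule ℚ (X → ℚ))
    (hL : IsNumLat L) (hK : K = L + (V : Set (X → ℚ))) :
    ∃ L' : Set (X → ℚ), IsNumLat L' ∧ K = L' + (V : Set (X → ℚ)) ∧
      (∀ l ∈ L', ∀ v ∈ V, ∑ x, l x * v x = 0) ∧
      (∀ (L₂ : Set (X → ℚ)) (V₂ : Submodule ℚ (X → ℚ)), IsNumLat L₂ →
        K = L₂ + (V₂ : Set (X → ℚ)) → (∀ l ∈ L₂, ∀ v ∈ V₂, ∑ x, l x * v x = 0) →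
        L₂ = L' ∧ V₂ = V) := by
  have hWV := (isCompl_orthogonal_dotProductBilin V).symm
  set L' := Submodule.projection _ V hWV '' L
  have hL' : IsNumLat L' := hL.image _
  have hKL' : K = L' + (V : Set (X → ℚ)) := hK.trans (add_submodule_eq_image_projection_add hWV L)
  have hL'W : L' ⊆ LinearMap.BilinForm.orthogonal (dotProductBilin ℚ ℚ) V := by
    rintro _ ⟨l, -, rfl⟩
    exact Submodule.projection_apply_mem hWV l
  refine ⟨L', hL', hKL', fun l hl => mem_orthogonal_dotProductBilin_iff.1 (hL'W hl), ?_⟩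
  intro L₂ V₂ hL₂ hK₂ horth₂
  have hL₂W : L₂ ⊆ LinearMap.BilinForm.orthogonal (dotProductBilin ℚ ℚ) V₂ :=
    fun l hl => mem_orthogonal_dotProductBilin_iff.2 (horth₂ l hl)
  obtain rfl : V₂ = V := SetLike.coe_injective <| by
    rw [← vectorSpacePart_add_submodule hL₂ hL₂W (isCompl_orthogonal_dotProductBilin V₂).symm,
      ← hK₂, hKL', vectorSpacePart_add_submodule hL' hL'W hWV]
  refine ⟨?_, rfl⟩
  rw [← add_submodule_inter_eq_of_subset hL₂W hWV.disjoint, ← hK₂, hKL',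
    add_submodule_inter_eq_of_subset hL'W hWV.disjoint]
end

section
/- Let K_S = L_S^{(1)} + V_S^{(1)} be a generalized number lattice on finite set S, where L_S^{(1)} is a number lattice with basis matrix B_1 (rows form a Z-basis), V_S^{(1)} is a vector space orthogonal to L_S^{(1)} with representative matrix C_1, and D_1 is a representative matrix of (span(L_S^{(1)}) + V_S^{(1)})^⊥. Define B_2, C_2, D_2 by stacking them as the transpose of the inverse of the stacked matrix [B_1; C_1; D_1]. Then the dual K_S^d := { g : <f,g> ∈ Z for all f ∈ K_S } equals L_S^{(2)} + V_S^{(2)}, where L_S^{(2)} is the number lattice with basis matrix B_2 and V_S^{(2)} is the row space of D_2. -/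
/-!
Write `M = [B1; C1; D1]`. Then `K` is the image of the coefficient set `ℤ^a × ℚ^b × 0` under
`α ↦ α M`, and `⟪α M, g⟫ = ⟪α, M g⟫`, so `g` lies in the dual exactly when `M g` lies in the
coordinatewise dual `ℤ^a × 0 × ℚ^c` of that set. Pulling back along `M` is pushing forward along
`N = M⁻¹`, whose columns are the rows of `B2, C2, D2`.
-/

open scoped Pointwise

/-- The dual of a collection of vectors: all vectors with integral dot product
with every member. -/
def dualLat {X : Type*} [Fintype X] (K : Set (X → ℚ)) : Set (X → ℚ) :=
  {g | ∀ f ∈ K, ∃ z : ℤ, ∑ x, f x * g x = (z : ℚ)}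

open Matrix Set

def integerPoints (X : Type*) : Set (X → ℚ) :=
  range fun l : X → ℤ => Int.cast ∘ l

theorem zero_mem_integerPoints (X : Type*) : (0 : X → ℚ) ∈ integerPoints X :=
  ⟨0, by ext; simp⟩

section VecMulImage

variable {R X m₁ m₂ : Type*} [Fintype m₁] [Fintype m₂]

theorem image_vecMul_image2_sumElim [Semiring R] (P : Matrix m₁ X R) (Q : Matrix m₂ X R)
    (S : Set (m₁ → R)) (T : Set (m₂ → R)) :
    (· ᵥ* fromRows P Q) '' image2 Sum.elim S T = (· ᵥ* P) '' S + (· ᵥ* Q) '' T := by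
  simp only [image_image2, sumElim_vecMul_fromRows, ← image2_add, image2_image_left,
    image2_image_right]

theorem image_vecMul_univ [CommSemiring R] (P : Matrix m₁ X R) :
    (· ᵥ* P) '' univ = (Submodule.span R (range fun i => P i) : Set (X → R)) := by
  rw [image_univ, ← row_def, ← range_vecMulLinear, LinearMap.coe_range]
  rfl

theorem image_vecMul_integerPoints (P : Matrix m₁ X ℚ) :
    (· ᵥ* P) '' integerPoints m₁ = {x | ∃ l : m₁ → ℤ, x = ∑ i, (l i : ℚ) • P i} := by
  ext x
  simp [integerPoints, vecMul_eq_sum, eq_comm]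

end VecMulImage

section Dual

variable {X : Type*} [Fintype X]

theorem mem_dualLat_iff {K : Set (X → ℚ)} {g : X → ℚ} :
    g ∈ dualLat K ↔ ∀ f ∈ K, ∃ z : ℤ, f ⬝ᵥ g = z :=
  Iff.rfl

theorem eq_zero_of_forall_mul_eq_intCast {r : ℚ} (h : ∀ q : ℚ, ∃ z : ℤ, q * r = z) : r = 0 := by
  by_contra hr
  obtain ⟨z, hz⟩ := h (2 * r)⁻¹
  have : (2 * z : ℤ) = 1 := by
    have : (2 * z : ℚ) = 1 := by rw [← hz]; field_simp
    exact_mod_cast this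
  omega

theorem dualLat_integerPoints : dualLat (integerPoints X) = integerPoints X := by
  classical
  ext g
  constructor
  · intro hg
    have hint (i : X) : ∃ z : ℤ, g i = z := by
      obtain ⟨z, hz⟩ := mem_dualLat_iff.mp hg (Pi.single i 1)
        ⟨Pi.single i 1, by ext; simp [Pi.single_apply]⟩
      exact ⟨z, by rwa [single_dotProduct, one_mul] at hz⟩
    choose z hz using hint
    exact ⟨z, funext fun i => (hz i).symm⟩
  · rintro ⟨w, rfl⟩ _ ⟨l, rfl⟩
    exact ⟨l ⬝ᵥ w, by simp [dotProduct]⟩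

theorem dualLat_univ : dualLat (univ : Set (X → ℚ)) = {0} := by
  classical
  ext g
  refine ⟨fun hg => funext fun i => eq_zero_of_forall_mul_eq_intCast fun q => ?_, ?_⟩
  · obtain ⟨z, hz⟩ := mem_dualLat_iff.mp hg (Pi.single i q) (mem_univ _)
    exact ⟨z, by rwa [single_dotProduct] at hz⟩
  · rintro rfl _ _
    exact ⟨0, by simp⟩

theorem dualLat_singleton_zero : dualLat ({0} : Set (X → ℚ)) = univ :=
  eq_univ_of_forall fun _ _ hf => ⟨0, by simp [eq_of_mem_singleton hf]⟩

theorem dualLat_image2_sumElim {Y : Type*} [Fintype Y] {S : Set (X → ℚ)} {T : Set (Y → ℚ)}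
    (hS : 0 ∈ S) (hT : 0 ∈ T) :
    dualLat (image2 Sum.elim S T) = image2 Sum.elim (dualLat S) (dualLat T) := by
  ext g
  constructor
  · intro hg
    rw [← Sum.elim_comp_inl_inr g] at hg ⊢
    refine ⟨_, fun s hs => ?_, _, fun t ht => ?_, rfl⟩
    · simpa [sumElim_dotProduct_sumElim] using hg _ (mem_image2_of_mem hs hT)
    · simpa [sumElim_dotProduct_sumElim] using hg _ (mem_image2_of_mem hS ht)
  · rintro ⟨u, hu, v, hv, rfl⟩ _ ⟨s, hs, t, ht, rfl⟩
    obtain ⟨z, hz⟩ := mem_dualLat_iff.mp hu s hs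
    obtain ⟨w, hw⟩ := mem_dualLat_iff.mp hv t ht
    refine ⟨z + w, ?_⟩
    change Sum.elim s t ⬝ᵥ Sum.elim u v = _
    rw [sumElim_dotProduct_sumElim, hz, hw, Int.cast_add]

theorem dualLat_image_vecMul {ι : Type*} [Fintype ι] (M : Matrix ι X ℚ) (A : Set (ι → ℚ)) :
    dualLat ((· ᵥ* M) '' A) = (M *ᵥ ·) ⁻¹' dualLat A := by
  ext g
  simp only [mem_preimage, mem_dualLat_iff, forall_mem_image, dotProduct_mulVec]

end Dual

theorem preimage_mulVec_eq_image {R m n : Type*} [Semiring R] [Fintype m] [Fintype n]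
    [DecidableEq m] [DecidableEq n] {M : Matrix m n R} {N : Matrix n m R}
    (hMN : M * N = 1) (hNM : N * M = 1) (S : Set (m → R)) :
    (M *ᵥ ·) ⁻¹' S = (N *ᵥ ·) '' S :=
  (congrFun (image_eq_preimage_of_inverse (f := (N *ᵥ ·)) (g := (M *ᵥ ·))
    (fun v => by simp only [mulVec_mulVec, hMN, one_mulVec])
    (fun v => by simp only [mulVec_mulVec, hNM, one_mulVec])) S).symm

theorem stmt1_general {n a b c : ℕ}
    (B1 : Matrix (Fin a) (Fin n) ℚ) (C1 : Matrix (Fin b) (Fin n) ℚ)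
    (D1 : Matrix (Fin c) (Fin n) ℚ)
    (L1 V1 K : Set (Fin n → ℚ))
    (hL1 : L1 = {x | ∃ l : Fin a → ℤ, x = ∑ i, (l i : ℚ) • B1 i})
    (hV1 : V1 = (Submodule.span ℚ (Set.range fun i => C1 i) : Set (Fin n → ℚ)))
    -- K is the generalized number lattice L1 + V1
    (hK : K = L1 + V1)
    -- [B2; C2; D2]ᵀ = [B1; C1; D1]⁻¹ : N is the inverse of the stacked matrix,
    -- so that B2 i = fun j => N j (inl i), D2 k = fun j => N j (inr (inr k)).
    (N : Matrix (Fin n) (Fin a ⊕ Fin b ⊕ Fin c) ℚ)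
    (hMN : (Matrix.of (Sum.elim B1 (Sum.elim C1 D1)) :
        Matrix (Fin a ⊕ Fin b ⊕ Fin c) (Fin n) ℚ) * N = 1)
    (hNM : N * (Matrix.of (Sum.elim B1 (Sum.elim C1 D1)) :
        Matrix (Fin a ⊕ Fin b ⊕ Fin c) (Fin n) ℚ) = 1) :
    dualLat K =
      {x | ∃ l : Fin a → ℤ, x = ∑ i, (l i : ℚ) • (fun j => N j (Sum.inl i))} +
      (Submodule.span ℚ (Set.range fun k => (fun j => N j (Sum.inr (Sum.inr k)) : Fin n → ℚ)) :
        Set (Fin n → ℚ)) := by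
  have hK' : K = (· ᵥ* fromRows B1 (fromRows C1 D1)) ''
      image2 Sum.elim (integerPoints (Fin a)) (image2 Sum.elim univ {0}) := by
    rw [image_vecMul_image2_sumElim, image_vecMul_image2_sumElim, image_vecMul_integerPoints,
      image_vecMul_univ, image_singleton, zero_vecMul, singleton_zero, add_zero, hK, hL1, hV1]
  have hN : (N *ᵥ ·) =
      (· ᵥ* fromRows Nᵀ.toRows₁ (fromRows Nᵀ.toRows₂.toRows₁ Nᵀ.toRows₂.toRows₂)) := by
    funext v
    rw [fromRows_toRows, fromRows_toRows, vecMul_transpose]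
  have h0 : (0 : Fin b ⊕ Fin c → ℚ) ∈ image2 Sum.elim univ {0} :=
    ⟨0, mem_univ _, 0, rfl, Sum.elim_zero_zero⟩
  rw [hK', dualLat_image_vecMul,
    preimage_mulVec_eq_image (M := fromRows B1 (fromRows C1 D1)) hMN hNM,
    dualLat_image2_sumElim (zero_mem_integerPoints _) h0,
    dualLat_image2_sumElim (mem_univ 0) (mem_singleton 0), dualLat_integerPoints, dualLat_univ,
    dualLat_singleton_zero]
  rw [hN, image_vecMul_image2_sumElim, image_vecMul_image2_sumElim, image_vecMul_integerPoints,
      image_vecMul_univ, image_singleton, zero_vecMul, singleton_zero, zero_add]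
  rfl

theorem stmt1 {n a b c : ℕ}
    (B1 : Matrix (Fin a) (Fin n) ℚ) (C1 : Matrix (Fin b) (Fin n) ℚ)
    (D1 : Matrix (Fin c) (Fin n) ℚ)
    (L1 V1 K : Set (Fin n → ℚ))
    -- B1 is a basis matrix for the number lattice L1
    (hB1 : LinearIndependent ℚ (fun i => B1 i))
    (hL1 : L1 = {x | ∃ l : Fin a → ℤ, x = ∑ i, (l i : ℚ) • B1 i})
    -- C1 is a representative matrix for the vector space V1
    (hC1 : LinearIndependent ℚ (fun i => C1 i))
    (hV1 : V1 = (Submodule.span ℚ (Set.range fun i => C1 i) : Set (Fin n → ℚ)))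
    -- V1 is orthogonal to L1
    (horth : ∀ l ∈ L1, ∀ v ∈ V1, ∑ x, l x * v x = 0)
    -- D1 is a representative matrix of (span L1 + V1)ᗮ
    (hD1 : LinearIndependent ℚ (fun i => D1 i))
    (hD1span : (Submodule.span ℚ (Set.range fun i => D1 i) : Set (Fin n → ℚ)) =
      {g | (∀ f ∈ L1, ∑ x, f x * g x = 0) ∧ (∀ f ∈ V1, ∑ x, f x * g x = 0)})
    -- K is the generalized number lattice L1 + V1
    (hK : K = L1 + V1)
    -- [B2; C2; D2]ᵀ = [B1; C1; D1]⁻¹ : N is the inverse of the stacked matrix,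
    -- so that B2 i = fun j => N j (inl i), D2 k = fun j => N j (inr (inr k)).
    (N : Matrix (Fin n) (Fin a ⊕ Fin b ⊕ Fin c) ℚ)
    (hMN : (Matrix.of (Sum.elim B1 (Sum.elim C1 D1)) :
        Matrix (Fin a ⊕ Fin b ⊕ Fin c) (Fin n) ℚ) * N = 1)
    (hNM : N * (Matrix.of (Sum.elim B1 (Sum.elim C1 D1)) :
        Matrix (Fin a ⊕ Fin b ⊕ Fin c) (Fin n) ℚ) = 1) :
    dualLat K =
      {x | ∃ l : Fin a → ℤ, x = ∑ i, (l i : ℚ) • (fun j => N j (Sum.inl i))} +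
      (Submodule.span ℚ (Set.range fun k => (fun j => N j (Sum.inr (Sum.inr k)) : Fin n → ℚ)) :
        Set (Fin n → ℚ)) :=
  stmt1_general B1 C1 D1 L1 V1 K hL1 hV1 hK N hMN hNM
end

section
/- Let K_S and K̂_S be generalized number lattices on a finite set S. Then (K_S + K̂_S)^d = K_S^d ∩ K̂_S^d, and consequently (K_S ∩ K̂_S)^d = K_S^d + K̂_S^d. -/
open scoped Pointwise

/-- A generalized number lattice. -/
def IsGenNumLat {M : Type*} [AddCommGroup M] [Module ℚ M] (K : Set M) : Prop :=
  ∃ (n k : ℕ) (b : Fin n → M) (c : Fin k → M),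
    K = {x | ∃ (l : Fin n → ℤ) (m : Fin k → ℚ),
      x = (∑ i, (l i : ℚ) • b i) + ∑ j, m j • c j}

/-!
A generalized number lattice `K ⊆ ℚ^S` has a normal form: in the coordinates of a suitable basis
of `ℚ^S` it is cut out by "integral" on one block of coordinates, "arbitrary" on a second block and
"zero" on the rest. To find it, split off the `ℚ`-span `W` inside `K`, take a `ℤ`-basis of the
(free, finitely generated) image of `K` in `ℚ^S ⧸ W`, lift it, and extend it together with a basis
of `W` to a basis of `ℚ^S`. In the coordinates of the dual basis for the dot product, the dual of a
lattice in normal form is again in normal form, with the roles of "arbitrary" and "zero" exchanged.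
Hence duals of generalized number lattices are generalized number lattices and `K^dd = K`.

The first identity holds because both lattices contain `0`; applying it to `K^d` and `K'^d` gives
`(K ∩ K')^d = (K^dd ∩ K'^dd)^d = (K^d + K'^d)^dd = K^d + K'^d`.
-/

open Module Submodule Set

universe u

section GenNumLat

variable {M : Type*} [AddCommGroup M] [Module ℚ M]

lemma setOf_sum_smul_eq_span_add_span {ι κ : Type*} [Fintype ι] [Fintype κ]
    (b : ι → M) (c : κ → M) :
    {x | ∃ (l : ι → ℤ) (m : κ → ℚ), x = (∑ i, (l i : ℚ) • b i) + ∑ j, m j • c j} =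
      (span ℤ (range b) : Set M) + span ℚ (range c) := by
  ext x
  simp only [mem_ofPred_eq, mem_add, SetLike.mem_coe, mem_span_range_iff_exists_fun,
    Int.cast_smul_eq_zsmul]
  constructor
  · rintro ⟨l, m, rfl⟩
    exact ⟨_, ⟨l, rfl⟩, _, ⟨m, rfl⟩, rfl⟩
  · rintro ⟨_, ⟨l, rfl⟩, _, ⟨m, rfl⟩, rfl⟩
    exact ⟨l, m, rfl⟩

lemma isGenNumLat_iff {K : Set M} :
    IsGenNumLat K ↔
      ∃ (Λ : Submodule ℤ M) (W : Submodule ℚ M), Λ.FG ∧ W.FG ∧ K = (Λ : Set M) + W := by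
  simp only [fg_iff_exists_fin_generating_family]
  constructor
  · rintro ⟨n, k, b, c, rfl⟩
    exact ⟨_, _, ⟨n, b, rfl⟩, ⟨k, c, rfl⟩, setOf_sum_smul_eq_span_add_span b c⟩
  · rintro ⟨_, _, ⟨n, b, rfl⟩, ⟨k, c, rfl⟩, rfl⟩
    exact ⟨n, k, b, c, (setOf_sum_smul_eq_span_add_span b c).symm⟩

namespace IsGenNumLat

lemma zero_mem {K : Set M} (hK : IsGenNumLat K) : (0 : M) ∈ K := by
  obtain ⟨Λ, W, -, -, rfl⟩ := isGenNumLat_iff.mp hK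
  exact ⟨0, Λ.zero_mem, 0, W.zero_mem, add_zero 0⟩

lemma add {K K' : Set M} (hK : IsGenNumLat K) (hK' : IsGenNumLat K') :
    IsGenNumLat (K + K') := by
  obtain ⟨Λ, W, hΛ, hW, rfl⟩ := isGenNumLat_iff.mp hK
  obtain ⟨Λ', W', hΛ', hW', rfl⟩ := isGenNumLat_iff.mp hK'
  refine isGenNumLat_iff.mpr ⟨Λ ⊔ Λ', W ⊔ W', hΛ.sup hΛ', hW.sup hW', ?_⟩
  rw [coe_sup, coe_sup, add_add_add_comm]

end IsGenNumLat

end GenNumLat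

section CoordLattice

variable {V : Type*} [AddCommGroup V] [Module ℚ V] {ι κ μ : Type*}

def coordLattice (v : Basis ι ℚ V) (A : ι → Set ℚ) : Set V :=
  {f | ∀ i, v.repr f i ∈ A i}

lemma coordLattice_reindex {ι' : Type*} (v : Basis ι ℚ V) (e : ι ≃ ι') (A : ι' → Set ℚ) :
    coordLattice (v.reindex e) A = coordLattice v (A ∘ e) := by
  ext f
  simp only [coordLattice, mem_ofPred_eq, Basis.repr_reindex_apply, Function.comp_apply]
  exact ⟨fun h i => by simpa using h (e i), fun h i' => by simpa using h (e.symm i')⟩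

def normalCoeffs (ι κ μ : Type*) : ι ⊕ (κ ⊕ μ) → Set ℚ :=
  Sum.elim (fun _ => range ((↑) : ℤ → ℚ)) (Sum.elim (fun _ => univ) (fun _ => {0}))

lemma coordLattice_normalCoeffs [Fintype ι] [Fintype κ] [Fintype μ]
    (v : Basis (ι ⊕ (κ ⊕ μ)) ℚ V) :
    coordLattice v (normalCoeffs ι κ μ) =
      (span ℤ (range (v ∘ Sum.inl)) : Set V) + span ℚ (range (v ∘ Sum.inr ∘ Sum.inl)) := by
  have hsplit : ∀ c : ι ⊕ (κ ⊕ μ) → ℚ, ∑ k, c k • v k =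
      (∑ i, c (.inl i) • v (.inl i)) + (∑ j, c (.inr (.inl j)) • v (.inr (.inl j))) +
        ∑ m, c (.inr (.inr m)) • v (.inr (.inr m)) := by
    intro c
    simp only [Fintype.sum_sum_type, add_assoc]
  rw [← setOf_sum_smul_eq_span_add_span]
  ext f
  constructor
  · intro hf
    choose l hl using fun i => hf (.inl i)
    have hzero : ∀ m, v.repr f (.inr (.inr m)) = 0 := fun m => hf (.inr (.inr m))
    refine ⟨l, fun j => v.repr f (.inr (.inl j)), ?_⟩
    conv_lhs => rw [← v.sum_repr f, hsplit]
    simp only [hl, hzero, zero_smul, Finset.sum_const_zero, add_zero]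
    rfl
  · rintro ⟨l, m, rfl⟩
    set c : ι ⊕ (κ ⊕ μ) → ℚ := Sum.elim (fun i => (l i : ℚ)) (Sum.elim m 0)
    have hf : (∑ i, (l i : ℚ) • (v ∘ Sum.inl) i) + ∑ j, m j • (v ∘ Sum.inr ∘ Sum.inl) j =
        ∑ k, c k • v k := by
      simp [c, hsplit]
    intro k
    rw [hf, v.repr_sum_self]
    rcases k with i | j | k <;> simp [c, normalCoeffs]

end CoordLattice

section CoeffDual

def coeffDual (A : Set ℚ) : Set ℚ :=
  {q | ∀ a ∈ A, ∃ z : ℤ, a * q = z}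

lemma zero_mem_coeffDual (A : Set ℚ) : (0 : ℚ) ∈ coeffDual A :=
  fun _ _ => ⟨0, by simp⟩

lemma coeffDual_range_intCast : coeffDual (range ((↑) : ℤ → ℚ)) = range ((↑) : ℤ → ℚ) := by
  ext q
  constructor
  · intro hq
    obtain ⟨z, hz⟩ := hq 1 ⟨1, Int.cast_one⟩
    exact ⟨z, by simpa using hz.symm⟩
  · rintro ⟨z, rfl⟩ _ ⟨y, rfl⟩
    exact ⟨y * z, by push_cast; ring⟩

lemma coeffDual_univ : coeffDual univ = {0} := by
  refine Subset.antisymm (fun q hq => ?_) (by simp [zero_mem_coeffDual])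
  by_contra hq0
  obtain ⟨z, hz⟩ := hq (1 / (2 * q)) trivial
  have h2z : (2 * z : ℚ) = 1 := by
    rw [← hz]
    field_simp [show q ≠ 0 from hq0]
  have : (2 * z : ℤ) = 1 := by exact_mod_cast h2z
  omega

lemma coeffDual_singleton_zero : coeffDual {0} = univ :=
  eq_univ_of_forall fun q a ha => ⟨0, by simp [mem_singleton_iff.mp ha]⟩

lemma forall_sum_mul_eq_intCast_iff {ι : Type*} [Fintype ι] [DecidableEq ι] {A : ι → Set ℚ}
    (hA : ∀ i, 0 ∈ A i) (d : ι → ℚ) :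
    (∀ c : ι → ℚ, (∀ i, c i ∈ A i) → ∃ z : ℤ, ∑ i, c i * d i = z) ↔
      ∀ i, d i ∈ coeffDual (A i) := by
  constructor
  · intro h i a ha
    have hc : ∀ j, (Pi.single i a : ι → ℚ) j ∈ A j := by
      intro j
      by_cases hj : j = i
      · subst hj; simpa using ha
      · simpa [Pi.single_apply, hj] using hA j
    simpa [Pi.single_apply] using h _ hc
  · intro h c hc
    choose z hz using fun i => h i (c i) (hc i)
    exact ⟨∑ i, z i, by push_cast; simp [hz]⟩

end CoeffDual

section DotDual

variable {X : Type*} [Fintype X] {ι : Type*} [Fintype ι] [DecidableEq ι]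

variable (X) in
def dotForm : LinearMap.BilinForm ℚ (X → ℚ) :=
  dotProductBilin ℚ ℚ

lemma dotForm_nondegenerate : (dotForm X).Nondegenerate :=
  ⟨fun f hf => dotProduct_self_eq_zero.mp (hf f), fun g hg => dotProduct_self_eq_zero.mp (hg g)⟩

noncomputable def dotDual (v : Basis ι ℚ (X → ℚ)) : Basis ι ℚ (X → ℚ) :=
  (dotForm X).dualBasis dotForm_nondegenerate v

lemma dotDual_repr (v : Basis ι ℚ (X → ℚ)) (g : X → ℚ) (i : ι) :
    (dotDual v).repr g i = g ⬝ᵥ v i :=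
  LinearMap.BilinForm.dualBasis_repr_apply _ v g i

lemma dotDual_dotDual (v : Basis ι ℚ (X → ℚ)) : dotDual (dotDual v) = v :=
  LinearMap.BilinForm.dualBasis_dualBasis _ ⟨dotProduct_comm⟩ v

lemma dotProduct_eq_sum_repr_mul_repr_dotDual (v : Basis ι ℚ (X → ℚ)) (f g : X → ℚ) :
    f ⬝ᵥ g = ∑ i, v.repr f i * (dotDual v).repr g i := by
  conv_lhs => rw [← v.sum_repr f]
  simp only [sum_dotProduct, smul_dotProduct, smul_eq_mul, dotDual_repr, dotProduct_comm g]

lemma dualLat_coordLattice (v : Basis ι ℚ (X → ℚ)) {A : ι → Set ℚ} (hA : ∀ i, 0 ∈ A i) :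
    dualLat (coordLattice v A) = coordLattice (dotDual v) (coeffDual ∘ A) := by
  ext g
  change (∀ f ∈ coordLattice v A, ∃ z : ℤ, f ⬝ᵥ g = z) ↔ _
  simp only [coordLattice, mem_ofPred_eq, Function.comp_apply,
    ← forall_sum_mul_eq_intCast_iff hA, dotProduct_eq_sum_repr_mul_repr_dotDual v _ g]
  refine ⟨fun h c hc => ?_, fun h f hf => h _ hf⟩
  simpa only [v.repr_sum_self] using h (∑ i, c i • v i) (by simpa only [v.repr_sum_self])

lemma dualLat_dualLat_coordLattice (v : Basis ι ℚ (X → ℚ)) {A : ι → Set ℚ}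
    (hA : ∀ i, coeffDual (coeffDual (A i)) = A i) :
    dualLat (dualLat (coordLattice v A)) = coordLattice v A := by
  rw [dualLat_coordLattice v fun i => hA i ▸ zero_mem_coeffDual _,
    dualLat_coordLattice (dotDual v) (A := coeffDual ∘ A) fun i => zero_mem_coeffDual _,
    dotDual_dotDual]
  exact congrArg _ (funext hA)

end DotDual

section NormalForm

variable {ι κ μ : Type*}

lemma coeffDual_coeffDual_normalCoeffs (k : ι ⊕ (κ ⊕ μ)) :
    coeffDual (coeffDual (normalCoeffs ι κ μ k)) = normalCoeffs ι κ μ k := by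
  rcases k with i | j | m <;>
    simp [normalCoeffs, coeffDual_range_intCast, coeffDual_univ, coeffDual_singleton_zero]

lemma coeffDual_comp_normalCoeffs :
    coeffDual ∘ normalCoeffs ι κ μ =
      normalCoeffs ι μ κ ∘ Equiv.sumCongr (Equiv.refl ι) (Equiv.sumComm κ μ) := by
  funext k
  rcases k with i | j | m <;>
    simp [normalCoeffs, coeffDual_range_intCast, coeffDual_univ, coeffDual_singleton_zero]

lemma dualLat_coordLattice_normalCoeffs {X : Type*} [Fintype X] [Fintype ι] [Fintype κ]
    [Fintype μ] [DecidableEq ι] [DecidableEq κ] [DecidableEq μ]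
    (v : Basis (ι ⊕ (κ ⊕ μ)) ℚ (X → ℚ)) :
    dualLat (coordLattice v (normalCoeffs ι κ μ)) =
      coordLattice ((dotDual v).reindex (Equiv.sumCongr (Equiv.refl ι) (Equiv.sumComm κ μ)))
        (normalCoeffs ι μ κ) := by
  rw [coordLattice_reindex, ← coeffDual_comp_normalCoeffs]
  exact dualLat_coordLattice v fun k => coeffDual_coeffDual_normalCoeffs k ▸ zero_mem_coeffDual _

lemma isGenNumLat_coordLattice_normalCoeffs {V : Type*} [AddCommGroup V] [Module ℚ V]
    [Fintype ι] [Fintype κ] [Fintype μ] (v : Basis (ι ⊕ (κ ⊕ μ)) ℚ V) :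
    IsGenNumLat (coordLattice v (normalCoeffs ι κ μ)) := by
  rw [coordLattice_normalCoeffs]
  exact isGenNumLat_iff.mpr ⟨_, _, fg_span (finite_range _), fg_span (finite_range _), rfl⟩

lemma Module.Basis.sumExtend_apply_inl {V : Type*} [AddCommGroup V] [Module ℚ V] {v : ι → V}
    (hv : LinearIndependent ℚ v) (i : ι) : Basis.sumExtend hv (.inl i) = v i := by
  simp only [Basis.sumExtend, Basis.reindex_apply, Basis.coe_extend]
  erw [Equiv.symm_symm, Equiv.trans_apply, Equiv.sumCongr_apply, Sum.map_inl,
    Equiv.Set.sumDiffSubset_apply_inl]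
  rfl

lemma exists_linearIndependent_mkQ_sup_eq {V : Type u} [AddCommGroup V] [Module ℚ V]
    (W : Submodule ℚ V) {Λ : Submodule ℤ V} (hΛ : Λ.FG) :
    ∃ (ι : Type u) (_ : Fintype ι) (a : ι → V), LinearIndependent ℚ (W.mkQ ∘ a) ∧
      Λ ⊔ W.restrictScalars ℤ = span ℤ (range a) ⊔ W.restrictScalars ℤ := by
  let π : V →ₗ[ℤ] V ⧸ W := W.mkQ.restrictScalars ℤ
  have hker : LinearMap.ker π = W.restrictScalars ℤ := by
    rw [LinearMap.ker_restrictScalars, ker_mkQ]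
  let Λ' := Λ.map π
  have : Module.Finite ℤ Λ' := Module.Finite.iff_fg.mpr (hΛ.map π)
  have : IsTorsionFree ℤ (V ⧸ W) := IsTorsionFree.trans_faithfulSMul ℤ ℚ _
  let B := Module.Free.chooseBasis ℤ Λ'
  have hB : span ℤ (range (Λ'.subtype ∘ B)) = Λ' := by
    rw [range_comp, ← map_span, B.span_eq, Submodule.map_top, range_subtype]
  choose a haΛ hπa using fun i => mem_map.mp (B i).2
  have hπa : π ∘ a = Λ'.subtype ∘ B := funext hπa
  refine ⟨_, inferInstance, a, ?_, ?_⟩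
  · rw [← LinearIndependent.iff_fractionRing ℤ ℚ]
    exact hπa ▸ B.linearIndependent.map' _ Λ'.ker_subtype
  · -- both sides are the preimage of `Λ'` under `π`
    rw [← hker, ← comap_map_eq, ← comap_map_eq, map_span, ← range_comp, hπa, hB]

theorem IsGenNumLat.exists_eq_coordLattice {V : Type u} [AddCommGroup V] [Module ℚ V]
    [FiniteDimensional ℚ V] {K : Set V} (hK : IsGenNumLat K) :
    ∃ (ι κ μ : Type u) (_ : Fintype ι) (_ : Fintype κ) (_ : Fintype μ)
      (v : Basis (ι ⊕ (κ ⊕ μ)) ℚ V), K = coordLattice v (normalCoeffs ι κ μ) := by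
  obtain ⟨Λ, W, hΛ, -, rfl⟩ := isGenNumLat_iff.mp hK
  obtain ⟨ι, _, a, ha, hsup⟩ := exists_linearIndependent_mkQ_sup_eq W hΛ
  let w := Module.Free.chooseBasis ℚ W
  have hw : span ℚ (range (W.subtype ∘ w)) = W := by
    rw [range_comp, ← map_span, w.span_eq, Submodule.map_top, range_subtype]
  have ht : LinearIndependent ℚ (Sum.elim a (W.subtype ∘ w)) := by
    have he : Sum.elim (fun j => (w j : V)) a ∘ Equiv.sumComm ι _ =
        Sum.elim a (W.subtype ∘ w) := by
      ext (i | j) <;> rfl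
    exact he ▸ (w.linearIndependent.sumElim_of_quotient a ha).comp _ (Equiv.sumComm _ _).injective
  let v₀ := Basis.sumExtend ht
  have := Module.Finite.finite_basis v₀
  have : Finite (Basis.sumExtendIndex ht) := .sum_right (ι ⊕ Module.Free.ChooseBasisIndex ℚ W)
  let v := v₀.reindex (Equiv.sumAssoc _ _ _)
  have := Fintype.ofFinite (Basis.sumExtendIndex ht)
  refine ⟨ι, _, _, inferInstance, inferInstance, inferInstance, v, ?_⟩
  have hv₁ : v ∘ Sum.inl = a := funext fun i => by
    simp only [v, v₀, Function.comp_apply, Basis.reindex_apply, Equiv.sumAssoc_symm_apply_inl,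
      Basis.sumExtend_apply_inl, Sum.elim_inl]
  have hv₂ : v ∘ Sum.inr ∘ Sum.inl = W.subtype ∘ w := funext fun j => by
    simp only [v, v₀, Function.comp_apply, Basis.reindex_apply, Equiv.sumAssoc_symm_apply_inr_inl,
      Basis.sumExtend_apply_inl, Sum.elim_inr]
  rw [coordLattice_normalCoeffs, hv₁, hv₂, hw]
  simpa only [coe_sup, coe_restrictScalars] using congrArg ((↑) : Submodule ℤ V → Set V) hsup

end NormalForm

section Dual

variable {X : Type*} [Fintype X]

lemma dualLat_add {K K' : Set (X → ℚ)} (hK : (0 : X → ℚ) ∈ K) (hK' : (0 : X → ℚ) ∈ K') :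
    dualLat (K + K') = dualLat K ∩ dualLat K' := by
  ext g
  refine ⟨fun hg => ⟨fun f hf => hg f ⟨f, hf, 0, hK', add_zero f⟩,
    fun f hf => hg f ⟨0, hK, f, hf, zero_add f⟩⟩, ?_⟩
  rintro ⟨hg, hg'⟩ _ ⟨f, hf, f', hf', rfl⟩
  obtain ⟨z, hz⟩ := hg f hf
  obtain ⟨z', hz'⟩ := hg' f' hf'
  refine ⟨z + z', ?_⟩
  simp only [Pi.add_apply, add_mul, Finset.sum_add_distrib, hz, hz', Int.cast_add]

lemma IsGenNumLat.isGenNumLat_dualLat {K : Set (X → ℚ)} (hK : IsGenNumLat K) :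
    IsGenNumLat (dualLat K) := by
  classical
  obtain ⟨ι, κ, μ, _, _, _, v, rfl⟩ := hK.exists_eq_coordLattice
  rw [dualLat_coordLattice_normalCoeffs]
  exact isGenNumLat_coordLattice_normalCoeffs _

lemma IsGenNumLat.dualLat_dualLat {K : Set (X → ℚ)} (hK : IsGenNumLat K) :
    dualLat (dualLat K) = K := by
  classical
  obtain ⟨ι, κ, μ, _, _, _, v, rfl⟩ := hK.exists_eq_coordLattice
  exact dualLat_dualLat_coordLattice v coeffDual_coeffDual_normalCoeffs

end Dual

theorem stmt4 {X : Type*} [Fintype X] (K K' : Set (X → ℚ))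
    (hK : IsGenNumLat K) (hK' : IsGenNumLat K') :
    dualLat (K + K') = dualLat K ∩ dualLat K' ∧
    dualLat (K ∩ K') = dualLat K + dualLat K' := by
  refine ⟨dualLat_add hK.zero_mem hK'.zero_mem, ?_⟩
  have hdK := hK.isGenNumLat_dualLat
  have hdK' := hK'.isGenNumLat_dualLat
  calc dualLat (K ∩ K')
      = dualLat (dualLat (dualLat K) ∩ dualLat (dualLat K')) := by
        rw [hK.dualLat_dualLat, hK'.dualLat_dualLat]
    _ = dualLat (dualLat (dualLat K + dualLat K')) := by
        rw [dualLat_add hdK.zero_mem hdK'.zero_mem]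
    _ = dualLat K + dualLat K' := (hdK.add hdK').dualLat_dualLat
end

section
/- Let K_{SP} be a collection of vectors on S ⊎ P closed under subtraction, and K_{SQ} a collection on S ⊎ Q closed under addition, such that K_{SP} ∘ S ⊇ K_{SQ} ∘ S and K_{SP} × S ⊆ K_{SQ} × S. Then 0_{SQ} ∈ K_{SQ}, the matched composition K_{SP} ↔ K_{SQ} is closed under addition and contains the zero vector, and K_{SP} ↔ (K_{SP} ↔ K_{SQ}) = K_{SQ}. -/
/-!
Read `K_SP ↔ K_SQ` as the relational composite `K_SP⁻¹ ○ K_SQ`. Composing once more with `K_SP`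
returns every `(s, q) ∈ K_SQ`, since `s` is the `S`-part of some `(s, p) ∈ K_SP`. Conversely, if
`(s, p), (s', p) ∈ K_SP` and `(s', q) ∈ K_SQ`, then `(s - s', 0) ∈ K_SP`, hence `(s - s', 0) ∈ K_SQ`
by the contraction hypothesis, and adding `(s', q)` gives `(s, q) ∈ K_SQ`.
-/

open SetRel

lemma add_mem_of_zero_mem_of_sub_mem {G : Type*} [AddGroup G] {K : Set G} (h0 : 0 ∈ K)
    (hsub : ∀ x ∈ K, ∀ y ∈ K, x - y ∈ K) : ∀ x ∈ K, ∀ y ∈ K, x + y ∈ K :=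
  fun _ hx _ hy ↦ (AddSubgroup.ofSub K ⟨0, h0⟩ fun x hx y hy ↦ by
    simpa only [sub_eq_add_neg] using hsub x hx y hy).add_mem hx hy

namespace SetRel

variable {A B C : Type*}

lemma add_mem_inv_comp [Add A] [Add B] [Add C] {K : SetRel A B} {L : SetRel A C}
    (hK : ∀ x ∈ K, ∀ y ∈ K, x + y ∈ K) (hL : ∀ x ∈ L, ∀ y ∈ L, x + y ∈ L) :
    ∀ x ∈ K.inv ○ L, ∀ y ∈ K.inv ○ L, x + y ∈ K.inv ○ L := by
  rintro _ ⟨a, hKa, hLa⟩ _ ⟨a', hKa', hLa'⟩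
  exact ⟨a + a', hK _ hKa _ hKa', hL _ hLa _ hLa'⟩

lemma subset_comp_inv_comp {K : SetRel A B} {L : SetRel A C} (hdom : L.dom ⊆ K.dom) :
    L ⊆ K ○ (K.inv ○ L) := by
  rintro ⟨a, c⟩ hL
  obtain ⟨b, hK⟩ := hdom ⟨c, hL⟩
  exact ⟨b, hK, a, hK, hL⟩

lemma comp_inv_comp_subset [AddGroup A] [AddGroup B] [AddZeroClass C]
    {K : SetRel A B} {L : SetRel A C}
    (hsub : ∀ x ∈ K, ∀ y ∈ K, x - y ∈ K) (hadd : ∀ x ∈ L, ∀ y ∈ L, x + y ∈ L)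
    (hcon : {a | (a, (0 : B)) ∈ K} ⊆ {a | (a, (0 : C)) ∈ L}) :
    K ○ (K.inv ○ L) ⊆ L := by
  rintro ⟨a, c⟩ ⟨b, hab, a', ha'b, ha'c⟩
  have hdiffK : (a - a', (0 : B)) ∈ K := by
    simpa only [Prod.mk_sub_mk, sub_self] using hsub _ hab (a', b) ha'b
  simpa only [Prod.mk_add_mk, sub_add_cancel, zero_add] using hadd _ (hcon hdiffK) _ ha'c

end SetRel

/-- Implicit inversion, basic form: for `K_SP` closed under subtraction and `K_SQ`
closed under addition with `K_SP ∘ S ⊇ K_SQ ∘ S` and `K_SP × S ⊆ K_SQ × S`, we get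
`0 ∈ K_SQ`, the matched composition `K_SP ↔ K_SQ` is closed under addition and
contains zero, and `K_SP ↔ (K_SP ↔ K_SQ) = K_SQ`. -/
theorem stmt9 {S P Q : Type*}
    (KSP : Set ((S → ℚ) × (P → ℚ))) (KSQ : Set ((S → ℚ) × (Q → ℚ)))
    (h0 : ((0, 0) : (S → ℚ) × (P → ℚ)) ∈ KSP)
    (hsub : ∀ x ∈ KSP, ∀ y ∈ KSP, x - y ∈ KSP)
    (hadd : ∀ x ∈ KSQ, ∀ y ∈ KSQ, x + y ∈ KSQ)
    (hres : {fS | ∃ fQ, (fS, fQ) ∈ KSQ} ⊆ {fS | ∃ fP, (fS, fP) ∈ KSP})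
    (hcon : {fS | ((fS, 0) : (S → ℚ) × (P → ℚ)) ∈ KSP} ⊆
      {fS | ((fS, 0) : (S → ℚ) × (Q → ℚ)) ∈ KSQ}) :
    ((0, 0) : (S → ℚ) × (Q → ℚ)) ∈ KSQ ∧
    (((0, 0) : (P → ℚ) × (Q → ℚ)) ∈
        {x : (P → ℚ) × (Q → ℚ) | ∃ fS, (fS, x.1) ∈ KSP ∧ (fS, x.2) ∈ KSQ}) ∧
    (∀ x ∈ {x : (P → ℚ) × (Q → ℚ) | ∃ fS, (fS, x.1) ∈ KSP ∧ (fS, x.2) ∈ KSQ},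
     ∀ y ∈ {x : (P → ℚ) × (Q → ℚ) | ∃ fS, (fS, x.1) ∈ KSP ∧ (fS, x.2) ∈ KSQ},
      x + y ∈ {x : (P → ℚ) × (Q → ℚ) | ∃ fS, (fS, x.1) ∈ KSP ∧ (fS, x.2) ∈ KSQ}) ∧
    {y : (S → ℚ) × (Q → ℚ) | ∃ hP : P → ℚ, (y.1, hP) ∈ KSP ∧
      ((hP, y.2) : (P → ℚ) × (Q → ℚ)) ∈
        {x : (P → ℚ) × (Q → ℚ) | ∃ fS, (fS, x.1) ∈ KSP ∧ (fS, x.2) ∈ KSQ}} = KSQ := by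
  have hzero : ((0, 0) : (S → ℚ) × (Q → ℚ)) ∈ KSQ := hcon h0
  have haddP := add_mem_of_zero_mem_of_sub_mem h0 hsub
  exact ⟨hzero, ⟨0, h0, hzero⟩, add_mem_inv_comp haddP hadd,
    (comp_inv_comp_subset hsub hadd hcon).antisymm (subset_comp_inv_comp hres)⟩
end

section
/- Let K_{SP} be a collection of vectors on S ⊎ P closed under subtraction, and K_{SQ} a collection on S ⊎ Q closed under addition with K_{SP} ∘ S ⊇ K_{SQ} ∘ S and K_{SP} × S ⊆ K_{SQ} × S. Then the equation K_{SP} ↔ K_{PQ} = K_{SQ}, subject to K_{PQ} being closed under addition, K_{SP} × P ⊆ K_{PQ} × P and K_{SP} ∘ P ⊇ K_{PQ} ∘ P, has K_{PQ} := K_{SP} ↔ K_{SQ} as its unique solution. -/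
/-!
Read the collections as relations: `K_SP ↔ K_SQ` is `K_SPᵀ ○ K_SQ`. If `K_SP ○ K_PQ = K_SQ`, then
`K_PQ ⊆ K_SPᵀ ○ K_SP ○ K_PQ` because `K_PQ ∘ P ⊆ K_SP ∘ P`, and conversely a pair `(f, g)` of
`K_SPᵀ ○ K_SP ○ K_PQ` comes from `(s, f), (s, h) ∈ K_SP` and `(h, g) ∈ K_PQ`; then `(0, f - h) ∈ K_SP`,
so `(f - h, 0) ∈ K_PQ` and `(f, g) = (f - h, 0) + (h, g) ∈ K_PQ`. The same two arguments, applied to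
`K_SPᵀ`, show that `K_SPᵀ ○ K_SQ` is a solution.
-/

open scoped SetRel

lemma Set.add_mem_of_sub_mem {G : Type*} [AddGroup G] {s : Set G}
    (hs : ∀ x ∈ s, ∀ y ∈ s, x - y ∈ s) : ∀ x ∈ s, ∀ y ∈ s, x + y ∈ s := by
  intro x hx y hy
  simpa using hs x hx _ (hs _ (hs y hy y hy) y hy)

namespace SetRel

variable {α β γ : Type*}

lemma dom_comp_subset (R : SetRel α β) (T : SetRel β γ) : (R ○ T).dom ⊆ R.dom :=
  fun _ ⟨_, b, hab, _⟩ ↦ ⟨b, hab⟩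

lemma subset_inv_comp_comp {R : SetRel α β} {T : SetRel β γ} (h : T.dom ⊆ R.cod) :
    T ⊆ R.inv ○ (R ○ T) := by
  rintro ⟨b, c⟩ hbc
  obtain ⟨a, hab⟩ := h ⟨c, hbc⟩
  exact ⟨a, hab, b, hab, hbc⟩

lemma inv_comp_add_mem [Add α] [Add β] [Add γ] {R : SetRel α β} {U : SetRel α γ}
    (hR : ∀ x ∈ R, ∀ y ∈ R, x + y ∈ R) (hU : ∀ x ∈ U, ∀ y ∈ U, x + y ∈ U) :
    ∀ x ∈ R.inv ○ U, ∀ y ∈ R.inv ○ U, x + y ∈ R.inv ○ U := by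
  rintro ⟨b, c⟩ ⟨a, hab, hac⟩ ⟨b', c'⟩ ⟨a', hab', hac'⟩
  exact ⟨a + a', hR _ hab _ hab', hU _ hac _ hac'⟩

variable [AddGroup α] [AddGroup β] [AddGroup γ]

lemma inv_sub_mem {R : SetRel α β} (hR : ∀ x ∈ R, ∀ y ∈ R, x - y ∈ R) :
    ∀ x ∈ R.inv, ∀ y ∈ R.inv, x - y ∈ R.inv :=
  fun _ hx _ hy ↦ hR _ hx _ hy

lemma inv_comp_comp_subset {R : SetRel α β} {T : SetRel β γ}
    (hR : ∀ x ∈ R, ∀ y ∈ R, x - y ∈ R) (hT : ∀ x ∈ T, ∀ y ∈ T, x + y ∈ T)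
    (hcon : {b | (0, b) ∈ R} ⊆ {b | (b, 0) ∈ T}) : R.inv ○ (R ○ T) ⊆ T := by
  rintro ⟨b, c⟩ ⟨a, hab, b', hab', hb'c⟩
  have hdiff : (b - b', 0) ∈ T := hcon (by simpa using hR _ hab _ hab')
  simpa using hT _ hdiff _ hb'c

lemma zero_contraction_subset_inv_comp {R : SetRel α β} {U : SetRel α γ}
    (hR : ∀ x ∈ R, ∀ y ∈ R, x - y ∈ R) (hcon : {a | (a, 0) ∈ R} ⊆ {a | (a, 0) ∈ U}) :
    {b | (0, b) ∈ R} ⊆ {b | (b, 0) ∈ R.inv ○ U} := by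
  intro b hb
  have hzero : (0 : α × β) ∈ R := sub_self ((0 : α), b) ▸ hR _ hb _ hb
  exact ⟨0, hb, hcon hzero⟩

lemma eq_inv_comp_of_comp_eq {R : SetRel α β} {T : SetRel β γ} {U : SetRel α γ}
    (hR : ∀ x ∈ R, ∀ y ∈ R, x - y ∈ R) (hT : ∀ x ∈ T, ∀ y ∈ T, x + y ∈ T)
    (hcon : {b | (0, b) ∈ R} ⊆ {b | (b, 0) ∈ T}) (hdom : T.dom ⊆ R.cod) (hcomp : R ○ T = U) :
    T = R.inv ○ U :=
  hcomp ▸ (subset_inv_comp_comp hdom).antisymm (inv_comp_comp_subset hR hT hcon)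

lemma comp_inv_comp_eq {R : SetRel α β} {U : SetRel α γ}
    (hR : ∀ x ∈ R, ∀ y ∈ R, x - y ∈ R) (hU : ∀ x ∈ U, ∀ y ∈ U, x + y ∈ U)
    (hcon : {a | (a, 0) ∈ R} ⊆ {a | (a, 0) ∈ U}) (hdom : U.dom ⊆ R.dom) :
    R ○ (R.inv ○ U) = U :=
  (inv_comp_comp_subset (inv_sub_mem hR) hU hcon).antisymm (subset_inv_comp_comp hdom)

end SetRel

theorem stmt10_general {S P Q : Type*}
    (KSP : Set ((S → ℚ) × (P → ℚ))) (KSQ : Set ((S → ℚ) × (Q → ℚ)))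
    (hsub : ∀ x ∈ KSP, ∀ y ∈ KSP, x - y ∈ KSP)
    (hadd : ∀ x ∈ KSQ, ∀ y ∈ KSQ, x + y ∈ KSQ)
    (hres : {fS | ∃ fQ, (fS, fQ) ∈ KSQ} ⊆ {fS | ∃ fP, (fS, fP) ∈ KSP})
    (hcon : {fS | ((fS, 0) : (S → ℚ) × (P → ℚ)) ∈ KSP} ⊆
      {fS | ((fS, 0) : (S → ℚ) × (Q → ℚ)) ∈ KSQ}) :
    ∀ KPQ : Set ((P → ℚ) × (Q → ℚ)),
      ((∀ x ∈ KPQ, ∀ y ∈ KPQ, x + y ∈ KPQ) ∧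
       {fP | ((0, fP) : (S → ℚ) × (P → ℚ)) ∈ KSP} ⊆
         {fP | ((fP, 0) : (P → ℚ) × (Q → ℚ)) ∈ KPQ} ∧
       {fP | ∃ gQ, (fP, gQ) ∈ KPQ} ⊆ {fP | ∃ fS, (fS, fP) ∈ KSP} ∧
       {y : (S → ℚ) × (Q → ℚ) | ∃ hP : P → ℚ, (y.1, hP) ∈ KSP ∧ (hP, y.2) ∈ KPQ} = KSQ)
      ↔ KPQ = {x : (P → ℚ) × (Q → ℚ) | ∃ fS, (fS, x.1) ∈ KSP ∧ (fS, x.2) ∈ KSQ} := by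
  -- The sets in the statement are `SetRel.dom`, `SetRel.cod`, `○` and `SetRel.inv KSP ○ KSQ`
  -- up to unfolding.
  intro KPQ
  constructor
  · rintro ⟨haddPQ, hconPQ, hdom, hcomp⟩
    exact SetRel.eq_inv_comp_of_comp_eq hsub haddPQ hconPQ hdom hcomp
  · rintro rfl
    exact ⟨SetRel.inv_comp_add_mem (Set.add_mem_of_sub_mem hsub) hadd,
      SetRel.zero_contraction_subset_inv_comp hsub hcon, SetRel.dom_comp_subset (SetRel.inv KSP) KSQ,
      SetRel.comp_inv_comp_eq hsub hadd hcon hres⟩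

/-- Uniqueness in implicit inversion: under the stated conditions,
`K_PQ := K_SP ↔ K_SQ` is the unique solution of `K_SP ↔ K_PQ = K_SQ` among
collections closed under addition with `K_SP × P ⊆ K_PQ × P` and
`K_SP ∘ P ⊇ K_PQ ∘ P`. -/
theorem stmt10 {S P Q : Type*}
    (KSP : Set ((S → ℚ) × (P → ℚ))) (KSQ : Set ((S → ℚ) × (Q → ℚ)))
    (h0 : ((0, 0) : (S → ℚ) × (P → ℚ)) ∈ KSP)
    (hsub : ∀ x ∈ KSP, ∀ y ∈ KSP, x - y ∈ KSP)
    (hadd : ∀ x ∈ KSQ, ∀ y ∈ KSQ, x + y ∈ KSQ)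
    (hres : {fS | ∃ fQ, (fS, fQ) ∈ KSQ} ⊆ {fS | ∃ fP, (fS, fP) ∈ KSP})
    (hcon : {fS | ((fS, 0) : (S → ℚ) × (P → ℚ)) ∈ KSP} ⊆
      {fS | ((fS, 0) : (S → ℚ) × (Q → ℚ)) ∈ KSQ}) :
    ∀ KPQ : Set ((P → ℚ) × (Q → ℚ)),
      ((∀ x ∈ KPQ, ∀ y ∈ KPQ, x + y ∈ KPQ) ∧
       {fP | ((0, fP) : (S → ℚ) × (P → ℚ)) ∈ KSP} ⊆
         {fP | ((fP, 0) : (P → ℚ) × (Q → ℚ)) ∈ KPQ} ∧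
       {fP | ∃ gQ, (fP, gQ) ∈ KPQ} ⊆ {fP | ∃ fS, (fS, fP) ∈ KSP} ∧
       {y : (S → ℚ) × (Q → ℚ) | ∃ hP : P → ℚ, (y.1, hP) ∈ KSP ∧ (hP, y.2) ∈ KPQ} = KSQ)
      ↔ KPQ = {x : (P → ℚ) × (Q → ℚ) | ∃ fS, (fS, x.1) ∈ KSP ∧ (fS, x.2) ∈ KSQ} :=
  stmt10_general KSP KSQ hsub hadd hres hcon
end

section
/- (Implicit inversion) Let V_{SP} be a vector space on S ⊎ P and K_P = V_P + L_P a generalized number lattice on P with V_P ∩ L_P = {0}. Suppose V_{SP} × P ⊆ V_P and V_{SP} ∘ P ⊇ K_P. Set K_S := V_{SP} ↔ K_P and V_S := V_{SP} ↔ V_P. Then V_{SP} ↔ K_S = K_P and V_{SP} ↔ V_S = V_P. -/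
open scoped Pointwise

/-- Implicit inversion: with `K_P = V_P + L_P`, `V_SP × P ⊆ V_P`, `V_SP ∘ P ⊇ K_P`,
setting `K_S := V_SP ↔ K_P` and `V_S := V_SP ↔ V_P`, we have
`V_SP ↔ K_S = K_P` and `V_SP ↔ V_S = V_P`. -/
theorem stmt12 {S P : Type*}
    (V : Submodule ℚ ((S → ℚ) × (P → ℚ))) (VP : Submodule ℚ (P → ℚ))
    (LP KP : Set (P → ℚ))
    (hLP : IsNumLat LP)
    (hKP : KP = (VP : Set (P → ℚ)) + LP)
    (hint : (VP : Set (P → ℚ)) ∩ LP = {0})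
    (hcon : ∀ fP : P → ℚ, ((0, fP) : (S → ℚ) × (P → ℚ)) ∈ V → fP ∈ VP)
    (hres : ∀ fP ∈ KP, ∃ fS, ((fS, fP) : (S → ℚ) × (P → ℚ)) ∈ V) :
    {hP | ∃ fS ∈ {fS | ∃ h ∈ KP, ((fS, h) : (S → ℚ) × (P → ℚ)) ∈ V},
      ((fS, hP) : (S → ℚ) × (P → ℚ)) ∈ V} = KP ∧
    {hP | ∃ fS ∈ {fS | ∃ h ∈ (VP : Set (P → ℚ)), ((fS, h) : (S → ℚ) × (P → ℚ)) ∈ V},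
      ((fS, hP) : (S → ℚ) × (P → ℚ)) ∈ V} = (VP : Set (P → ℚ)) := by
  -- 0 ∈ LP
  have h0L : (0 : P → ℚ) ∈ LP := by
    obtain ⟨n, b, rfl⟩ := hLP
    exact ⟨0, by simp⟩
  -- key: if (fS,h) and (fS,h') ∈ V then h - h' ∈ VP
  have key : ∀ (fS : S → ℚ) (h h' : P → ℚ),
      ((fS, h) : (S → ℚ) × (P → ℚ)) ∈ V → ((fS, h') : (S → ℚ) × (P → ℚ)) ∈ V →
      h - h' ∈ VP := by
    intro fS h h' h1 h2
    have := V.sub_mem h1 h2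
    simpa using hcon _ (by simpa using this)
  constructor
  · ext hP
    simp only [Set.mem_setOf_eq]
    constructor
    · rintro ⟨fS, ⟨h, hhK, hV⟩, hV'⟩
      rw [hKP] at hhK ⊢
      obtain ⟨v, hv, l, hl, rfl⟩ := hhK
      refine ⟨v + (hP - (v + l)), ?_, l, hl, by module⟩
      exact VP.add_mem hv (key fS hP (v + l) hV' hV)
    · intro hK
      obtain ⟨fS, hV⟩ := hres hP hK
      exact ⟨fS, ⟨hP, hK, hV⟩, hV⟩
  · ext hP
    simp only [Set.mem_setOf_eq]
    constructor
    · rintro ⟨fS, ⟨h, hhV, hV⟩, hV'⟩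
      have := key fS hP h hV' hV
      simpa using VP.add_mem this hhV
    · intro hv
      obtain ⟨fS, hV⟩ := hres hP (by rw [hKP]; exact ⟨hP, hv, 0, h0L, by simp⟩)
      exact ⟨fS, ⟨hP, hv, hV⟩, hV⟩
end

section
/- Let V_{SP}, K_P = V_P + L_P (with V_P ∩ L_P = {0}), K_S = V_{SP} ↔ K_P, V_S = V_{SP} ↔ V_P, and suppose V_{SP} × P ⊆ V_P and V_{SP} ∘ P ⊇ K_P. Let L'_S ⊆ V_{SP} ↔ L_P be a number lattice with L'_S ∩ V_S = {0} and L_P ⊆ V_{SP} ↔ L'_S. Then for each nonzero x_P ∈ L_P there is a unique x_S ∈ L'_S with (x_S, x_P) ∈ V_{SP}, and this x_S is nonzero. -/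
open scoped Pointwise

lemma IsNumLat.sub_mem {M : Type*} [AddCommGroup M] [Module ℚ M] {L : Set M}
    (h : IsNumLat L) {x y : M} (hx : x ∈ L) (hy : y ∈ L) : x - y ∈ L := by
  obtain ⟨n, b, rfl⟩ := h
  obtain ⟨l, rfl⟩ := hx
  obtain ⟨m, rfl⟩ := hy
  exact ⟨l - m, by simp [sub_smul, Finset.sum_sub_distrib]⟩

theorem stmt13 {S P : Type*}
    (V : Submodule ℚ ((S → ℚ) × (P → ℚ))) (VP : Submodule ℚ (P → ℚ))
    (LP KP : Set (P → ℚ)) (L'S : Set (S → ℚ))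
    (hLP : IsNumLat LP)
    (hKP : KP = (VP : Set (P → ℚ)) + LP)
    (hint : (VP : Set (P → ℚ)) ∩ LP = {0})
    (hcon : ∀ fP : P → ℚ, ((0, fP) : (S → ℚ) × (P → ℚ)) ∈ V → fP ∈ VP)
    (hres : ∀ fP ∈ KP, ∃ fS, ((fS, fP) : (S → ℚ) × (P → ℚ)) ∈ V)
    (hL'S : IsNumLat L'S)
    -- L'_S ⊆ V_SP ↔ L_P
    (hL'sub : L'S ⊆ {fS | ∃ h ∈ LP, ((fS, h) : (S → ℚ) × (P → ℚ)) ∈ V})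
    -- L'_S ∩ V_S = {0}, where V_S = V_SP ↔ V_P
    (hL'V : L'S ∩ {fS | ∃ h ∈ (VP : Set (P → ℚ)), ((fS, h) : (S → ℚ) × (P → ℚ)) ∈ V} = {0})
    -- L_P ⊆ V_SP ↔ L'_S
    (hback : LP ⊆ {hP | ∃ fS ∈ L'S, ((fS, hP) : (S → ℚ) × (P → ℚ)) ∈ V}) :
    ∀ xP ∈ LP, xP ≠ 0 →
      (∃! xS, xS ∈ L'S ∧ ((xS, xP) : (S → ℚ) × (P → ℚ)) ∈ V) ∧
      (∀ xS ∈ L'S, ((xS, xP) : (S → ℚ) × (P → ℚ)) ∈ V → xS ≠ 0) := by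
  intro xP hxP hne
  obtain ⟨xS, hxS, hxV⟩ := hback hxP
  have nz : ∀ yS ∈ L'S, ((yS, xP) : (S → ℚ) × (P → ℚ)) ∈ V → yS ≠ 0 := by
    intro yS _ hyV h0
    subst h0
    have : xP ∈ (VP : Set (P → ℚ)) ∩ LP := ⟨hcon xP hyV, hxP⟩
    rw [hint] at this
    exact hne this
  refine ⟨⟨xS, ⟨hxS, hxV⟩, ?_⟩, nz⟩
  intro yS ⟨hyS, hyV⟩
  have hd : yS - xS ∈ L'S ∩ {fS | ∃ h ∈ (VP : Set (P → ℚ)), ((fS, h) : (S → ℚ) × (P → ℚ)) ∈ V} := by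
    refine ⟨hL'S.sub_mem hyS hxS, 0, VP.zero_mem, ?_⟩
    have := V.sub_mem hyV hxV
    simpa using this
  rw [hL'V] at hd
  have : yS - xS = 0 := hd
  linear_combination (norm := abel) this
end

section
/- Every standard representative matrix of a regular vector space is totally unimodular. Moreover, if (I | K) is a standard representative matrix of a vector space V_S, then (−K^T | I) is a standard representative matrix of the orthogonal complement V_S^⊥; hence if V_S is regular, so is V_S^⊥. -/
/-- A matrix is totally unimodular iff every square submatrix has determinant 0, 1 or -1. -/
def TU {R X : Type*} (A : Matrix R X ℚ) : Prop :=
  ∀ (k : ℕ) (f : Fin k → R) (g : Fin k → X),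
    (A.submatrix f g).det = 0 ∨ (A.submatrix f g).det = 1 ∨ (A.submatrix f g).det = -1

/-- `A` is a standard representative matrix of `V`: its rows are independent and
span `V`, and after a column permutation it has the form `(I | K)`, i.e. some
injectively chosen columns form an identity matrix. -/
def IsStdRep {R X : Type*} [DecidableEq R] (A : Matrix R X ℚ) (V : Set (X → ℚ)) : Prop :=
  LinearIndependent ℚ (fun i => A i) ∧
  (Submodule.span ℚ (Set.range fun i => A i) : Set (X → ℚ)) = V ∧
  ∃ e : R → X, Function.Injective e ∧ ∀ i j, A i (e j) = if i = j then 1 else 0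

/-- A regular vector space: one having a totally unimodular representative matrix. -/
def IsRegularSpace {X : Type*} (V : Set (X → ℚ)) : Prop :=
  ∃ (m : ℕ) (A : Matrix (Fin m) X ℚ), TU A ∧ LinearIndependent ℚ (fun i => A i) ∧
    (Submodule.span ℚ (Set.range fun i => A i) : Set (X → ℚ)) = V

/-- The orthogonal complement of a collection of vectors. -/
def perp {X : Type*} [Fintype X] (V : Set (X → ℚ)) : Set (X → ℚ) :=
  {g | ∀ f ∈ V, ∑ x, f x * g x = 0}

/-!
Write a standard representative as `A = (I | K)` up to a column permutation. If `A'` is a totally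
unimodular representative of the same space, then `A = W A'` where `W` inverts the column block of
`A'` sitting under the identity, so `det W = ±1` and every maximal minor of `A` lies in
`{0, ±1}`; since any square minor of `A` extends, through the identity columns, to a maximal
minor with the same determinant, `A` is totally unimodular. The orthogonal complement of the row
space of `(I | K)` is `{(x, y) | x + K y = 0} = {(-K y, y)}`, the row space of `(-Kᵀ | I)`, which
is totally unimodular together with `K`. For the last claim, multiplying a totally unimodular
representative of `V` by the inverse of a nonsingular column block gives a standard
representative, which is totally unimodular by the first claim.
-/

open Matrix Submodule Set

lemma SignType.mul_mem_range_cast {R : Type*} [CommRing R] {a b : R}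
    (ha : a ∈ range SignType.cast) (hb : b ∈ range SignType.cast) :
    a * b ∈ range SignType.cast := by
  obtain ⟨s, rfl⟩ := ha
  obtain ⟨t, rfl⟩ := hb
  exact ⟨s * t, SignType.coe_mul s t⟩

namespace Matrix

section CommRing

variable {m n R : Type*} [CommRing R]

lemma IsTotallyUnimodular.neg {A : Matrix m n R} (hA : A.IsTotallyUnimodular) :
    (-A).IsTotallyUnimodular := by
  intro k f g hf hg
  rw [show (-A).submatrix f g = -A.submatrix f g from rfl, det_neg]
  exact SignType.mul_mem_range_cast ⟨(-1) ^ Fintype.card (Fin k), by simp⟩ (hA k f g hf hg)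

lemma span_row_mul_le [Fintype m] {l : Type*} (W : Matrix l m R) (A : Matrix m n R) :
    span R (range (W * A).row) ≤ span R (range A.row) := by
  rw [span_le, ← range_vecMulLinear]
  rintro _ ⟨i, rfl⟩
  exact ⟨W i, (mul_apply_eq_vecMul W A i).symm⟩

lemma exists_eq_mul_of_span_row_le [Fintype m] {l : Type*} {A : Matrix l n R}
    {A' : Matrix m n R} (h : span R (range A.row) ≤ span R (range A'.row)) :
    ∃ W : Matrix l m R, A = W * A' := by
  have hrow : ∀ i, ∃ w, w ᵥ* A' = A i := fun i =>
    LinearMap.mem_range.mp (range_vecMulLinear A' ▸ h (subset_span ⟨i, rfl⟩))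
  choose W hW using hrow
  exact ⟨of W, by funext i; rw [mul_apply_eq_vecMul]; exact (hW i).symm⟩

lemma linearIndependent_row_of_submatrix_id_eq_one [DecidableEq m] {A : Matrix m n R}
    {e : m → n} (hAe : A.submatrix id e = 1) : LinearIndependent R A.row := by
  refine LinearIndependent.of_comp (LinearMap.funLeft R R e) ?_
  convert Pi.linearIndependent_single_one m R with i
  ext j
  simpa [one_apply, Pi.single_apply, eq_comm] using congr_fun₂ hAe i j

variable [Fintype m] [DecidableEq m]

lemma det_submatrix_eq_det_submatrix_extend {A : Matrix m n R} {e : m → n}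
    (hAe : A.submatrix id e = 1) {k : ℕ} {f : Fin k → m} (hf : f.Injective) (g : Fin k → n) :
    (A.submatrix f g).det = (A.submatrix id (Function.extend f g e)).det := by
  classical
  let σ : Fin k ⊕ {i // i ∉ range f} ≃ m :=
    (Equiv.sumCongr (Equiv.ofInjective f hf) (Equiv.refl _)).trans (Equiv.sumCompl (· ∈ range f))
  have hblocks : (A.submatrix id (Function.extend f g e)).submatrix σ σ =
      fromBlocks (A.submatrix f g) 0 (of fun (i : {i // i ∉ range f}) j => A i (g j)) 1 := by
    have hext : ∀ i : {i // i ∉ range f}, Function.extend f g e i = e i :=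
      fun i => Function.extend_apply' _ _ _ i.2
    have hAe' : ∀ i j, A i (e j) = (1 : Matrix m m R) i j := congr_fun₂ hAe
    ext (i | i) (j | j)
    · simp [σ, hf.extend_apply]
    · simp [σ, hext, hAe', one_apply_ne (fun h => j.2 ⟨i, h⟩)]
    · simp [σ, hf.extend_apply]
    · simp [σ, hext, hAe', one_apply, Subtype.ext_iff]
  rw [← det_submatrix_equiv_self σ, hblocks, det_fromBlocks_zero₁₂, det_one, mul_one]

lemma isTotallyUnimodular_of_det_submatrix_id {A : Matrix m n R} {e : m → n}
    (hAe : A.submatrix id e = 1) (h : ∀ c : m → n, (A.submatrix id c).det ∈ range SignType.cast) :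
    A.IsTotallyUnimodular := fun _ f g hf _ => by
  rw [det_submatrix_eq_det_submatrix_extend hAe hf g]
  exact h _

lemma isTotallyUnimodular_of_span_row_le [Nontrivial R] {A A' : Matrix m n R}
    (hA' : A'.IsTotallyUnimodular) (hspan : span R (range A.row) ≤ span R (range A'.row))
    {e : m → n} (hAe : A.submatrix id e = 1) : A.IsTotallyUnimodular := by
  obtain ⟨W, rfl⟩ := exists_eq_mul_of_span_row_le hspan
  have hminor : ∀ c : m → n, ((W * A').submatrix id c).det = W.det * (A'.submatrix id c).det :=
    fun c => by rw [submatrix_mul _ _ id id c Function.bijective_id, det_mul, submatrix_id_id]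
  have hmem : ∀ c : m → n, (A'.submatrix id c).det ∈ range SignType.cast :=
    (isTotallyUnimodular_iff_fintype A').mp hA' m id
  -- `W` inverts the unimodular block `A'.submatrix id e`, so its determinant is `±1`
  have hW : W.det ∈ range SignType.cast := by
    obtain ⟨s, hs⟩ := hmem e
    have h1 : W.det * s = 1 := by rw [hs, ← hminor, hAe, det_one]
    cases s
    · simp at h1
    · exact ⟨-1, by simp at h1 ⊢; linear_combination h1⟩
    · exact ⟨1, by simpa using h1.symm⟩
  exact isTotallyUnimodular_of_det_submatrix_id hAe fun c =>
    hminor c ▸ SignType.mul_mem_range_cast hW (hmem c)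

lemma fromCols_one_mulVec_eq_zero_iff [Fintype n] [DecidableEq n] (K : Matrix m n R)
    (v : m ⊕ n → R) :
    fromCols 1 K *ᵥ v = 0 ↔ ∃ c, c ᵥ* fromCols (-Kᵀ) 1 = v := by
  simp only [fromCols_mulVec, vecMul_fromCols, one_mulVec, vecMul_one, vecMul_neg,
    vecMul_transpose]
  constructor
  · intro h
    refine ⟨v ∘ Sum.inr, ?_⟩
    rw [← eq_neg_of_add_eq_zero_left h]
    exact Sum.elim_comp_inl_inr v
  · rintro ⟨c, rfl⟩
    simp

end CommRing

lemma exists_isUnit_submatrix_id {m n K : Type*} [Fintype m] [Fintype n] [DecidableEq m]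
    [Field K] {A : Matrix m n K} (h : LinearIndependent K A.row) :
    ∃ e : m → n, e.Injective ∧ IsUnit (A.submatrix id e) := by
  have hcols : span K (range A.col) = ⊤ := eq_top_of_finrank_eq <| by
    rw [← rank_eq_finrank_span_cols, h.rank_matrix, Module.finrank_fintype_fun_eq_card]
  obtain ⟨κ, a, ha, hspan, hli⟩ := exists_linearIndependent' K A.col
  have : Finite κ := hli.finite
  cases nonempty_fintype κ
  have hcard : Fintype.card κ = Fintype.card m := by
    rw [linearIndependent_iff_card_eq_finrank_span.mp hli, Set.finrank, hspan, hcols, finrank_top,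
      Module.finrank_fintype_fun_eq_card]
  let ε : m ≃ κ := (Fintype.equivOfCardEq hcard).symm
  refine ⟨a ∘ ε, ha.comp ε.injective, ?_⟩
  rw [← linearIndependent_cols_iff_isUnit]
  exact hli.comp ε ε.injective

end Matrix

lemma tu_iff_isTotallyUnimodular {m n : Type*} (A : Matrix m n ℚ) :
    TU A ↔ A.IsTotallyUnimodular := by
  have key : ∀ q : ℚ, q ∈ range SignType.cast ↔ q = 0 ∨ q = 1 ∨ q = -1 := by
    intro q
    constructor
    · rintro ⟨s, rfl⟩
      cases s <;> simp
    · rintro (rfl | rfl | rfl)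
      exacts [⟨0, rfl⟩, ⟨1, rfl⟩, ⟨-1, rfl⟩]
  simp only [isTotallyUnimodular_iff, key, TU]

lemma isRegularSpace_iff {X : Type*} {V : Set (X → ℚ)} :
    IsRegularSpace V ↔ ∃ (k : ℕ) (A : Matrix (Fin k) X ℚ), A.IsTotallyUnimodular ∧
      LinearIndependent ℚ A.row ∧ (span ℚ (range A.row) : Set (X → ℚ)) = V := by
  simp only [IsRegularSpace, tu_iff_isTotallyUnimodular]
  rfl

lemma isStdRep_iff {m X : Type*} [DecidableEq m] {A : Matrix m X ℚ} {V : Set (X → ℚ)} :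
    IsStdRep A V ↔ LinearIndependent ℚ A.row ∧ (span ℚ (range A.row) : Set (X → ℚ)) = V ∧
      ∃ e : m → X, e.Injective ∧ A.submatrix id e = 1 := by
  simp only [IsStdRep, ← Matrix.ext_iff]
  rfl

lemma perp_span_row {m X : Type*} [Fintype X] (P : Matrix m X ℚ) :
    perp (span ℚ (range P.row) : Set (X → ℚ)) = {g | P *ᵥ g = 0} := by
  ext g
  simp only [perp, mem_ofPred_eq, SetLike.mem_coe]
  constructor
  · intro h
    funext i
    exact h _ (subset_span ⟨i, rfl⟩)
  · intro h f hf
    induction hf using span_induction with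
    | mem x hx => obtain ⟨i, rfl⟩ := hx; exact congr_fun h i
    | zero => simp
    | add x y _ _ hx hy => simp [add_mul, Finset.sum_add_distrib, hx, hy]
    | smul a x _ hx => simp [mul_assoc, ← Finset.mul_sum, hx]

lemma perp_span_row_fromCols_one_submatrix {m n X : Type*} [Fintype m] [Fintype n] [Fintype X]
    [DecidableEq m] [DecidableEq n] (K : Matrix m n ℚ) (σ : m ⊕ n ≃ X) :
    perp (span ℚ (range ((fromCols 1 K).submatrix id σ.symm).row) : Set (X → ℚ)) =
      span ℚ (range ((fromCols (-Kᵀ) 1).submatrix id σ.symm).row) := by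
  ext g
  rw [perp_span_row, SetLike.mem_coe, ← range_vecMulLinear, mem_ofPred_eq, submatrix_mulVec_equiv,
    Equiv.symm_symm, Function.comp_id, fromCols_one_mulVec_eq_zero_iff]
  simp only [LinearMap.mem_range, vecMulLinear_apply]
  exact exists_congr fun c => (Equiv.comp_symm_eq σ g _).symm

lemma IsStdRep.fromCols_neg_transpose_perp {m n : Type*} [Fintype m] [Fintype n] [DecidableEq m]
    [DecidableEq n] {K : Matrix m n ℚ} {V : Set (m ⊕ n → ℚ)} (hV : IsStdRep (fromCols 1 K) V) :
    IsStdRep (fromCols (-Kᵀ) 1) (perp V) := by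
  obtain ⟨-, rfl, -⟩ := isStdRep_iff.mp hV
  have hid : (fromCols (-Kᵀ) 1).submatrix id Sum.inr = (1 : Matrix n n ℚ) := rfl
  refine isStdRep_iff.mpr ⟨linearIndependent_row_of_submatrix_id_eq_one hid, ?_,
    Sum.inr, Sum.inr_injective, hid⟩
  simpa using (perp_span_row_fromCols_one_submatrix K (Equiv.refl _)).symm

lemma IsStdRep.isTotallyUnimodular {m X : Type*} [DecidableEq m] {A : Matrix m X ℚ}
    {V : Set (X → ℚ)} (hV : IsRegularSpace V) (hA : IsStdRep A V) : A.IsTotallyUnimodular := by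
  obtain ⟨k, A', hA'tu, hA'li, rfl⟩ := isRegularSpace_iff.mp hV
  obtain ⟨hli, hspan, e, -, hAe⟩ := isStdRep_iff.mp hA
  replace hspan : span ℚ (range A.row) = span ℚ (range A'.row) := SetLike.coe_injective hspan
  have : Finite m := hli.finite_of_le_span_finite _ (range A'.row) (hspan ▸ subset_span)
  cases nonempty_fintype m
  have hcard : Fintype.card m = k := by
    rw [linearIndependent_iff_card_eq_finrank_span.mp hli, Set.finrank, hspan, ← Set.finrank,
      ← linearIndependent_iff_card_eq_finrank_span.mp hA'li, Fintype.card_fin]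
  let ε : m ≃ Fin k := Fintype.equivFinOfCardEq hcard
  refine isTotallyUnimodular_of_span_row_le (hA'tu.submatrix ε id) ?_ hAe
  rw [hspan, show (A'.submatrix ε id).row = A'.row ∘ ε from rfl, EquivLike.range_comp]

lemma isRegularSpace_span_row {m X : Type*} [Fintype m] {D : Matrix m X ℚ}
    (hD : D.IsTotallyUnimodular) (hli : LinearIndependent ℚ D.row) :
    IsRegularSpace (span ℚ (range D.row) : Set (X → ℚ)) := by
  let ε := (Fintype.equivFin m).symm
  refine isRegularSpace_iff.mpr ⟨_, D.submatrix ε id, hD.submatrix _ _, hli.comp _ ε.injective, ?_⟩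
  rw [show (D.submatrix ε id).row = D.row ∘ ε from rfl, EquivLike.range_comp]

lemma IsRegularSpace.perp {X : Type*} [Fintype X] {V : Set (X → ℚ)} (hV : IsRegularSpace V) :
    IsRegularSpace (perp V) := by
  classical
  obtain ⟨k, A', hA'tu, hA'li, rfl⟩ := isRegularSpace_iff.mp hV
  obtain ⟨e, he, hunit⟩ := exists_isUnit_submatrix_id hA'li
  -- normalize `A'` to a standard representative `A = (I | K)`, up to the column order `σ`
  set A := (A'.submatrix id e)⁻¹ * A'
  have hAe : A.submatrix id e = 1 := by
    rw [submatrix_mul _ _ id id e Function.bijective_id, submatrix_id_id,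
      nonsing_inv_mul _ ((isUnit_iff_isUnit_det _).mp hunit)]
  have hspan : span ℚ (range A.row) = span ℚ (range A'.row) := by
    refine le_antisymm (span_row_mul_le _ _) ?_
    simpa [A, ← Matrix.mul_assoc, mul_nonsing_inv _ ((isUnit_iff_isUnit_det _).mp hunit)] using
      span_row_mul_le (A'.submatrix id e) A
  have hAtu : A.IsTotallyUnimodular := isTotallyUnimodular_of_span_row_le hA'tu hspan.le hAe
  let σ : Fin k ⊕ {x // x ∉ range e} ≃ X :=
    (Equiv.sumCongr (Equiv.ofInjective e he) (Equiv.refl _)).trans (Equiv.sumCompl (· ∈ range e))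
  set K := A.submatrix id (σ ∘ Sum.inr)
  have hA : A = (fromCols 1 K).submatrix id σ.symm := by
    ext i x
    obtain ⟨j | c, rfl⟩ := σ.surjective x
    · simpa [σ] using congr_fun₂ hAe i j
    · simp [σ, K]
  set D := (fromCols (-Kᵀ) 1).submatrix id σ.symm
  have hDtu : D.IsTotallyUnimodular :=
    (hAtu.submatrix id _).transpose.neg.fromCols_one.submatrix id σ.symm
  have hDli : LinearIndependent ℚ D.row :=
    linearIndependent_row_of_submatrix_id_eq_one (e := σ ∘ Sum.inr) (by ext; simp [D])
  rw [← hspan, hA, perp_span_row_fromCols_one_submatrix]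
  exact isRegularSpace_span_row hDtu hDli

theorem stmt16 {X R B : Type*} [Fintype X] [Fintype B] [DecidableEq R] [DecidableEq B]
    {m : ℕ} :
    -- every standard representative matrix of a regular vector space is TU
    (∀ (V : Set (X → ℚ)) (A : Matrix R X ℚ), IsRegularSpace V → IsStdRep A V → TU A) ∧
    -- if (I | K) is a standard representative matrix of V, then (-Kᵀ | I) is a
    -- standard representative matrix of Vᗮ
    (∀ (K : Matrix (Fin m) B ℚ) (V : Set ((Fin m) ⊕ B → ℚ)),
      IsStdRep (Matrix.of fun i =>
          (Sum.elim (fun j => if i = j then (1 : ℚ) else 0) (K i)) :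
          Matrix (Fin m) (Fin m ⊕ B) ℚ) V →
      IsStdRep (Matrix.of fun b =>
          (Sum.elim (fun j => -K j b) (fun b' => if b = b' then (1 : ℚ) else 0)) :
          Matrix B (Fin m ⊕ B) ℚ) (perp V)) ∧
    -- if V is regular then so is Vᗮ
    (∀ V : Set (X → ℚ), IsRegularSpace V → IsRegularSpace (perp V)) :=
  ⟨fun _ _ hV hA => (tu_iff_isTotallyUnimodular _).mpr (hA.isTotallyUnimodular hV),
    fun _ _ hA => hA.fromCols_neg_transpose_perp,
    fun _ hV => hV.perp⟩
end

section
/- Let Q = (Q_T | Q_B) be a totally unimodular matrix where Q_B is a column permutation of an identity matrix. Let x be a vector in the row space of Q and write x_T, x_B for its restrictions to the column sets T and B. Then ||x_T|| ≤ sqrt(|T| · |B|) · ||x_B||. -/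
theorem stmt17 {T B R : Type*} [Fintype T] [Fintype B] [DecidableEq B]
    (QT : Matrix R T ℚ) (QB : Matrix R B ℚ)
    -- Q = (Q_T | Q_B) is totally unimodular
    (hTU : TU (Matrix.of (fun r => Sum.elim (QT r) (QB r)) : Matrix R (T ⊕ B) ℚ))
    -- Q_B is a column permutation of the identity matrix
    (e : R ≃ B) (hQB : ∀ r b, QB r b = if e r = b then 1 else 0)
    -- x lies in the row space of Q
    (x : T ⊕ B → ℚ)
    (hx : x ∈ Submodule.span ℚ (Set.range fun r => (Sum.elim (QT r) (QB r) : T ⊕ B → ℚ))) :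
    Real.sqrt (∑ t, ((x (Sum.inl t) : ℝ)) ^ 2) ≤
      Real.sqrt ((Fintype.card T : ℝ) * (Fintype.card B : ℝ)) *
        Real.sqrt (∑ b, ((x (Sum.inr b) : ℝ)) ^ 2) := by
  haveI : Fintype R := Fintype.ofEquiv B e.symm
  -- entries of QT are bounded by 1 in absolute value
  have hent : ∀ r t, |QT r t| ≤ 1 := by
    intro r t
    rcases hTU 1 (fun _ => r) (fun _ => Sum.inl t) with h | h | h <;>
      simp [Matrix.det_fin_one] at h <;> rw [h] <;> norm_num
  -- representation of x
  obtain ⟨c, hc⟩ := (Submodule.mem_span_range_iff_exists_fun ℚ).mp hx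
  have hxb : ∀ b, x (Sum.inr b) = c (e.symm b) := by
    intro b
    have := congrFun hc (Sum.inr b)
    simp only [Finset.sum_apply, Pi.smul_apply, Sum.elim_inr, smul_eq_mul] at this
    rw [← this]
    rw [← e.symm.sum_comp (fun r => c r * QB r b)]
    simp [hQB]
  have hxt : ∀ t, x (Sum.inl t) = ∑ r, c r * QT r t := by
    intro t
    have := congrFun hc (Sum.inl t)
    simp only [Finset.sum_apply, Pi.smul_apply, Sum.elim_inl, smul_eq_mul] at this
    rw [← this]
  -- |x_t| ≤ ∑ |x_b|
  have habs : ∀ t, |x (Sum.inl t)| ≤ ∑ b, |x (Sum.inr b)| := by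
    intro t
    rw [hxt]
    calc |∑ r, c r * QT r t| ≤ ∑ r, |c r * QT r t| := Finset.abs_sum_le_sum_abs _ _
      _ ≤ ∑ r, |c r| := by
          apply Finset.sum_le_sum
          intro r _
          rw [abs_mul]
          calc |c r| * |QT r t| ≤ |c r| * 1 :=
                mul_le_mul_of_nonneg_left (hent r t) (abs_nonneg _)
            _ = |c r| := mul_one _
      _ = ∑ b, |x (Sum.inr b)| := by
          rw [← e.symm.sum_comp (fun r => |c r|)]
          exact Finset.sum_congr rfl (fun b _ => by rw [hxb])
  -- pass to ℝ
  set S : ℝ := ∑ b, ((x (Sum.inr b) : ℝ)) ^ 2 with hS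
  have hSnn : 0 ≤ S := Finset.sum_nonneg fun _ _ => sq_nonneg _
  have key : ∀ t, ((x (Sum.inl t) : ℝ)) ^ 2 ≤ (Fintype.card B : ℝ) * S := by
    intro t
    have hcast : |(x (Sum.inl t) : ℝ)| ≤ ∑ b, |(x (Sum.inr b) : ℝ)| := by
      exact_mod_cast habs t
    have h1 : ((x (Sum.inl t) : ℝ)) ^ 2 ≤ (∑ b, |(x (Sum.inr b) : ℝ)|) ^ 2 := by
      rw [← sq_abs]
      exact pow_le_pow_left₀ (abs_nonneg _) hcast 2
    have h2 : (∑ b, |(x (Sum.inr b) : ℝ)|) ^ 2 ≤ (Fintype.card B : ℝ) * S := by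
      have := sq_sum_le_card_mul_sum_sq (s := (Finset.univ : Finset B))
        (f := fun b => |(x (Sum.inr b) : ℝ)|)
      simpa [Finset.card_univ, sq_abs, hS] using this
    exact h1.trans h2
  have main : ∑ t, ((x (Sum.inl t) : ℝ)) ^ 2 ≤
      (Fintype.card T : ℝ) * (Fintype.card B : ℝ) * S := by
    calc ∑ t, ((x (Sum.inl t) : ℝ)) ^ 2 ≤ ∑ _t : T, (Fintype.card B : ℝ) * S :=
          Finset.sum_le_sum fun t _ => key t
      _ = (Fintype.card T : ℝ) * ((Fintype.card B : ℝ) * S) := by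
          rw [Finset.sum_const, Finset.card_univ, nsmul_eq_mul]
      _ = (Fintype.card T : ℝ) * (Fintype.card B : ℝ) * S := by ring
  calc Real.sqrt (∑ t, ((x (Sum.inl t) : ℝ)) ^ 2)
      ≤ Real.sqrt ((Fintype.card T : ℝ) * (Fintype.card B : ℝ) * S) :=
        Real.sqrt_le_sqrt main
    _ = Real.sqrt ((Fintype.card T : ℝ) * (Fintype.card B : ℝ)) * Real.sqrt S :=
        Real.sqrt_mul (by positivity) _
end

section
/- Let V_{SP} be a regular vector space on S ⊎ P and let x_P ∈ V_{SP} ∘ P. Then there exists x_S with (x_S, x_P) ∈ V_{SP} and ||x_S|| ≤ sqrt(|S| · |P|) · ||x_P||. -/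
open Matrix Submodule Set

lemma exists_fin_linearIndependent_span_eq {K V ι : Type*} [DivisionRing K] [AddCommGroup V]
    [Module K V] [Finite ι] (v : ι → V) :
    ∃ (r : ℕ) (e : Fin r → ι), LinearIndependent K (v ∘ e) ∧
      span K (range (v ∘ e)) = span K (range v) := by
  obtain ⟨κ, a, ha, hspan, hli⟩ := exists_linearIndependent' K v
  have : Finite κ := Finite.of_injective a ha
  let e := (Finite.equivFin κ).symm
  refine ⟨_, a ∘ e, hli.comp e e.injective, ?_⟩
  rw [← hspan, ← Function.comp_assoc, e.surjective.range_comp]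

lemma Matrix.exists_det_submatrix_ne_zero_of_linearIndependent {K n : Type*} [Field K]
    [Fintype n] {r : ℕ} (M : Matrix (Fin r) n K) (hM : LinearIndependent K M.row) :
    ∃ κ : Fin r → n, (M.submatrix id κ).det ≠ 0 := by
  obtain ⟨r', κ, hli, hspan⟩ := exists_fin_linearIndependent_span_eq (K := K) M.col
  obtain rfl : r' = r := by
    have := finrank_span_eq_card hli
    rwa [hspan, ← rank_eq_finrank_span_cols, hM.rank_matrix, Fintype.card_fin,
      Fintype.card_fin, eq_comm] at this
  refine ⟨κ, ?_⟩
  rw [← isUnit_iff_ne_zero, ← isUnit_iff_isUnit_det, ← linearIndependent_cols_iff_isUnit]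
  exact hli

lemma Matrix.exists_det_submatrix_ne_zero_span_row_eq {K m n : Type*} [Field K] [Finite m]
    [Fintype n] (M : Matrix m n K) :
    ∃ (r : ℕ) (ι : Fin r → m) (κ : Fin r → n), (M.submatrix ι κ).det ≠ 0 ∧
      span K (range (M.submatrix ι id).row) = span K (range M.row) := by
  obtain ⟨r, ι, hli, hspan⟩ := exists_fin_linearIndependent_span_eq (K := K) M.row
  obtain ⟨κ, hκ⟩ := (M.submatrix ι id).exists_det_submatrix_ne_zero_of_linearIndependent hli
  exact ⟨r, ι, κ, hκ, hspan⟩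

lemma Matrix.injective_of_det_submatrix_ne_zero {R X α : Type*} [CommRing α] {r : ℕ}
    {A : Matrix R X α} {ι : Fin r → R} {κ : Fin r → X} (h : (A.submatrix ι κ).det ≠ 0) :
    Function.Injective κ := fun a b hab =>
  by_contra fun hne => h (det_zero_of_column_eq hne fun j => by simp [hab])

namespace TU

variable {R X : Type*} {A : Matrix R X ℚ}

lemma abs_det_submatrix_le_one (hA : TU A) {k : ℕ} (f : Fin k → R) (g : Fin k → X) :
    |(A.submatrix f g).det| ≤ 1 := by
  rcases hA k f g with h | h | h <;> simp [h]

lemma abs_det_submatrix_eq_one (hA : TU A) {k : ℕ} {f : Fin k → R} {g : Fin k → X}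
    (h : (A.submatrix f g).det ≠ 0) : |(A.submatrix f g).det| = 1 := by
  rcases hA k f g with h' | h' | h' <;> simp_all

lemma exists_mulVec_eq_col_abs_le_one (hA : TU A) {r : ℕ} {ι : Fin r → R}
    {κ : Fin r → X} (hN : (A.submatrix ι κ).det ≠ 0) (x : X) :
    ∃ w : Fin r → ℚ, A.submatrix ι κ *ᵥ w = (fun j => A (ι j) x) ∧ ∀ k, |w k| ≤ 1 := by
  classical
  set N := A.submatrix ι κ
  refine ⟨(N.det)⁻¹ • N.cramer fun j => A (ι j) x, ?_, fun k => ?_⟩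
  · rw [cramer_eq_adjugate_mulVec, mulVec_smul, mulVec_mulVec, mul_adjugate, smul_mulVec,
      one_mulVec, smul_smul, inv_mul_cancel₀ hN, one_smul]
  · have hcol : N.updateCol k (fun j => A (ι j) x) = A.submatrix ι (Function.update κ k x) := by
      ext j k'
      rcases eq_or_ne k' k with rfl | hk
      · simp
      · simp [N, updateCol_ne hk, Function.update_of_ne hk]
    rw [Pi.smul_apply, smul_eq_mul, cramer_apply, hcol, abs_mul, abs_inv,
      hA.abs_det_submatrix_eq_one hN, inv_one, one_mul]
    exact hA.abs_det_submatrix_le_one ι _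

lemma abs_vecMul_apply_le (hA : TU A) {r : ℕ} {ι : Fin r → R}
    {κ : Fin r → X} (hN : (A.submatrix ι κ).det ≠ 0) (d : Fin r → ℚ) (x : X) :
    |(d ᵥ* A.submatrix ι id) x| ≤ ∑ k, |(d ᵥ* A.submatrix ι id) (κ k)| := by
  obtain ⟨w, hw, hw1⟩ := hA.exists_mulVec_eq_col_abs_le_one hN x
  have hexpand : (d ᵥ* A.submatrix ι id) x = ∑ k, (d ᵥ* A.submatrix ι id) (κ k) * w k := by
    calc (d ᵥ* A.submatrix ι id) x = d ⬝ᵥ (A.submatrix ι κ *ᵥ w) := by rw [hw]; rfl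
      _ = _ := by rw [dotProduct_mulVec]; rfl
  rw [hexpand]
  refine (Finset.abs_sum_le_sum_abs _ _).trans (Finset.sum_le_sum fun k _ => ?_)
  rw [abs_mul]
  exact mul_le_of_le_one_right (abs_nonneg _) (hw1 k)

end TU

lemma Finset.sum_comp_le_univ_sum_of_injective {ι κ M : Type*} [Fintype ι] [Fintype κ]
    [AddCommMonoid M] [PartialOrder M] [IsOrderedAddMonoid M] {e : κ → ι}
    (he : Function.Injective e) {f : ι → M} (hf : ∀ i, 0 ≤ f i) :
    ∑ k, f (e k) ≤ ∑ i, f i := by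
  classical
  rw [← Finset.sum_image fun a _ b _ h => he h]
  exact Finset.sum_le_univ_sum_of_nonneg hf

lemma Real.sqrt_sum_sq_le_of_abs_le_sum_abs {S P : Type*} [Fintype S] [Fintype P]
    {y : S → ℝ} {x : P → ℝ} (h : ∀ s, |y s| ≤ ∑ p, |x p|) :
    √(∑ s, y s ^ 2) ≤ √((Fintype.card S : ℝ) * Fintype.card P) * √(∑ p, x p ^ 2) := by
  rw [← Real.sqrt_mul (by positivity)]
  refine Real.sqrt_le_sqrt ?_
  calc ∑ s, y s ^ 2 ≤ ∑ _s : S, (∑ p, |x p|) ^ 2 := by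
        refine Finset.sum_le_sum fun s _ => ?_
        exact sq_le_sq' (abs_le.mp (h s)).1 (abs_le.mp (h s)).2
    _ = Fintype.card S * (∑ p, |x p|) ^ 2 := by simp
    _ ≤ Fintype.card S * (Fintype.card P * ∑ p, |x p| ^ 2) := by
        gcongr
        exact sq_sum_le_card_mul_sum_sq
    _ = Fintype.card S * Fintype.card P * ∑ p, x p ^ 2 := by simp [mul_assoc]

theorem stmt18 {S P : Type*} [Fintype S] [Fintype P]
    (V : Set (S ⊕ P → ℚ)) (hV : IsRegularSpace V)
    (xP : P → ℚ)
    -- x_P ∈ V ∘ P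
    (hx : ∃ fS, Sum.elim fS xP ∈ V) :
    ∃ xS : S → ℚ, Sum.elim xS xP ∈ V ∧
      Real.sqrt (∑ s, ((xS s : ℝ)) ^ 2) ≤
        Real.sqrt ((Fintype.card S : ℝ) * (Fintype.card P : ℝ)) *
          Real.sqrt (∑ p, ((xP p : ℝ)) ^ 2) := by
  obtain ⟨m, A, hA, -, rfl⟩ := hV
  obtain ⟨fS, c, hc⟩ : ∃ fS, Sum.elim fS xP ∈ LinearMap.range A.vecMulLinear := by
    rwa [range_vecMulLinear]
  set AP := A.submatrix id Sum.inr
  obtain ⟨r, ι, κ, hN, hspan⟩ := AP.exists_det_submatrix_ne_zero_span_row_eq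
  obtain ⟨d, hd⟩ : xP ∈ LinearMap.range (AP.submatrix ι id).vecMulLinear := by
    rw [range_vecMulLinear, hspan, ← range_vecMulLinear]
    exact ⟨c, funext fun p => congrFun hc (Sum.inr p)⟩
  set y := d ᵥ* A.submatrix ι id
  have hyP : y ∘ Sum.inr = xP := hd
  refine ⟨y ∘ Sum.inl, ?_, Real.sqrt_sum_sq_le_of_abs_le_sum_abs fun s => ?_⟩
  · have hy : y ∈ span ℚ (range fun i => A i) :=
      span_mono (range_comp_subset_range ι A) <| by
        change y ∈ span ℚ (range (A.submatrix ι id).row)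
        rw [← range_vecMulLinear]
        exact ⟨d, rfl⟩
    simpa [← hyP] using hy
  · have hyS : |y (Sum.inl s)| ≤ ∑ p, |xP p| := calc
      |y (Sum.inl s)| ≤ ∑ k, |y (Sum.inr (κ k))| :=
        hA.abs_vecMul_apply_le (κ := Sum.inr ∘ κ) hN d (Sum.inl s)
      _ = ∑ k, |xP (κ k)| := by simp [← hyP]
      _ ≤ ∑ p, |xP p| := Finset.sum_comp_le_univ_sum_of_injective (f := fun p => |xP p|)
          (injective_of_det_submatrix_ne_zero hN) fun p => abs_nonneg _
    exact_mod_cast hyS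
end
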